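/- arXiv:0911.2571 — 5 statements merged into one kernel-verified Lean document; each statement's English description precedes it below -/
import Mathlib

section
/- Let (X_t)_{t≥0} be a nonnegative càdlàg submartingale of class (Σ) on (Ω, F, P, (F_t)_{t≥0}), and let g := sup{t ≥ 0 : X_t = 0}. If Q and Q' are two σ-finite measures on (Ω, F) such that Q[g = ∞] = 0 = Q'[g = ∞] and, for every t ≥ 0 and every bounded F_t-measurable random variable Γ_t, Q[Γ_t 1_{g ≤ t}] = E_P[Γ_t X_t] and Q'[Γ_t 1_{g ≤ t}] = E_P[Γ_t X_t], then Q = Q'. (Uniqueness part of the main theorem.) -/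
open MeasureTheory Filter Set
open scoped NNReal ENNReal Topology

noncomputable section

variable {Ω : Type*}

/-- A function indexed by `ℝ≥0` is càdlàg: right-continuous with left limits. -/
def Cadlag (f : ℝ≥0 → ℝ) : Prop :=
  (∀ t : ℝ≥0, Tendsto f (nhdsWithin t (Set.Ici t)) (nhds (f t))) ∧
  (∀ t : ℝ≥0, ∃ l : ℝ, Tendsto f (nhdsWithin t (Set.Iio t)) (nhds l))

/-- Natural conditions for a filtered probability space. -/
def NaturalConditions {m0 : MeasurableSpace Ω} (ℱ : Filtration ℝ≥0 m0)
    (P : Measure Ω) : Prop :=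
  (∀ t : ℝ≥0, (ℱ t : MeasurableSpace Ω) = ⨅ s ∈ Set.Ioi t, (ℱ s : MeasurableSpace Ω)) ∧
  (∀ t : ℝ≥0, ∀ A : Set Ω, MeasurableSet[ℱ t] A → P A = 0 →
    ∀ B ⊆ A, MeasurableSet[ℱ 0] B)

/-- `X = N + A` is a nonnegative càdlàg submartingale of class `(Σ)`. -/
structure ClassSigma {m0 : MeasurableSpace Ω} (ℱ : Filtration ℝ≥0 m0)
    (P : Measure Ω) (X N A : ℝ≥0 → Ω → ℝ) : Prop where
  nonneg : ∀ t ω, 0 ≤ X t ω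
  cadlagX : ∀ ω, Cadlag fun t => X t ω
  subm : Submartingale X ℱ P
  decomp : ∀ t ω, X t ω = N t ω + A t ω
  martN : Martingale N ℱ P
  cadlagN : ∀ ω, Cadlag fun t => N t ω
  contA : ∀ ω, Continuous fun t => A t ω
  adaptedA : Adapted ℱ A
  monoA : ∀ ω, Monotone fun t => A t ω
  zeroA : ∀ ω, A 0 ω = 0
  carriedA : ∀ᵐ ω ∂P, ∀ s t : ℝ≥0, s ≤ t →
    (∀ u ∈ Set.Icc s t, X u ω ≠ 0) → A t ω = A s ω

/-- `g`, the last zero of `X` (with value `∞` if the zeros are unbounded, `0` if none). -/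
def lastZero (X : ℝ≥0 → Ω → ℝ) (ω : Ω) : ℝ≥0∞ :=
  sSup ((fun t : ℝ≥0 => (t : ℝ≥0∞)) '' {t | X t ω = 0})

/-- `Q` is the σ-finite measure associated with `X`. -/
def AssociatedMeasure {m0 : MeasurableSpace Ω} (ℱ : Filtration ℝ≥0 m0)
    (P Q : Measure Ω) (X : ℝ≥0 → Ω → ℝ) : Prop :=
  SigmaFinite Q ∧ Q {ω | lastZero X ω = ∞} = 0 ∧
  ∀ t : ℝ≥0, ∀ Λ : Set Ω, MeasurableSet[ℱ t] Λ →
    Q (Λ ∩ {ω | lastZero X ω ≤ (t : ℝ≥0∞)}) = ENNReal.ofReal (∫ ω in Λ, X t ω ∂P)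

/-- `M` is a density martingale of the functional `F` (w.r.t. `P` and `Q`). -/
def DensityMartingale {m0 : MeasurableSpace Ω} (ℱ : Filtration ℝ≥0 m0)
    (P Q : Measure Ω) (F : Ω → ℝ) (M : ℝ≥0 → Ω → ℝ) : Prop :=
  Martingale M ℱ P ∧ (∀ t : ℝ≥0, ∀ᵐ ω ∂P, 0 ≤ M t ω) ∧ (∀ ω, Cadlag fun t => M t ω) ∧
  ∀ t : ℝ≥0, ∀ Λ : Set Ω, MeasurableSet[ℱ t] Λ →
    ∫ ω in Λ, F ω ∂Q = ∫ ω in Λ, M t ω ∂P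

/-- The exponential identity : `∫_Λ e^{-A_∞} dQ = E_P[1_Λ e^{-A_t}(1+X_t)]`. -/
def ExpIdentity {m0 : MeasurableSpace Ω} (ℱ : Filtration ℝ≥0 m0)
    (P Q : Measure Ω) (X A : ℝ≥0 → Ω → ℝ) : Prop :=
  ∀ t : ℝ≥0, ∀ Λ : Set Ω, MeasurableSet[ℱ t] Λ →
    ∫ ω in Λ, (⨅ s : ℝ≥0, Real.exp (-(A s ω))) ∂Q =
    ∫ ω in Λ, Real.exp (-(A t ω)) * (1 + X t ω) ∂P

/-- last passage time of `X` in `(-∞, a]`. -/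
def lastBelow (a : ℝ) (X : ℝ≥0 → Ω → ℝ) (ω : Ω) : ℝ≥0∞ :=
  sSup ((fun t : ℝ≥0 => (t : ℝ≥0∞)) '' {t | X t ω ≤ a})

/-!
The measure `Q` is determined by `P` on each event `{g ≤ s}`: for `t ≥ s` and `Λ ∈ ℱ t`,
`Q (Λ ∩ {g ≤ s}) = E_P[X_t ; Λ \ Z]`, where `Z ∈ ℱ t` is the event that `inf X ≤ 0` on a countable
set `D ⊆ [s, t]` which contains `t` and is dense in `(s, t)`. On `Zᶜ ∩ {g ≤ t}`, right-continuity
leaves no zero of `X` in `(s, t]`, so `g ≤ s`. Conversely `Z ∩ {g ≤ s}` is `Q`-null: splitting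
`{X_u < ε for some u ∈ T}`, `T ⊆ D` finite, according to the first such `u`, and applying the
defining identity of `Q` at that time, bounds its `Q`-measure by `ε`. Hence the finite measures
`Q` and `Q'` restricted to `{g ≤ s}` agree on the π-system `⋃ t, ℱ t` generating `m0`, and both
`Q` and `Q'` live on `{g < ∞} = ⋃ n, {g ≤ n}`.
-/

namespace ClassSigmaUniqueness

lemma le_lastZero {X : ℝ≥0 → Ω → ℝ} {ω : Ω} {u : ℝ≥0} (h : X u ω = 0) :
    (u : ℝ≥0∞) ≤ lastZero X ω :=
  le_sSup ⟨u, h, rfl⟩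

lemma lastZero_le_iff {X : ℝ≥0 → Ω → ℝ} {ω : Ω} {t : ℝ≥0∞} :
    lastZero X ω ≤ t ↔ ∀ u : ℝ≥0, X u ω = 0 → (u : ℝ≥0∞) ≤ t := by
  simp [lastZero, sSup_le_iff]

lemma iUnion_lastZero_le_natCast (X : ℝ≥0 → Ω → ℝ) :
    ⋃ n : ℕ, {ω | lastZero X ω ≤ (n : ℝ≥0)} = {ω | lastZero X ω ≠ ∞} := by
  ext ω
  simp only [mem_iUnion, mem_ofPred_eq, ENNReal.coe_natCast]
  exact ⟨fun ⟨n, hn⟩ => ne_top_of_le_ne_top (ENNReal.natCast_ne_top n) hn,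
    fun h => (ENNReal.exists_nat_gt h).imp fun _ => le_of_lt⟩

def denseGrid (s t : ℝ≥0) : Set ℝ≥0 :=
  insert t (range (TopologicalSpace.denseSeq ℝ≥0) ∩ Ioo s t)

lemma countable_denseGrid (s t : ℝ≥0) : (denseGrid s t).Countable :=
  ((countable_range _).mono inter_subset_left).insert t

lemma denseGrid_subset_Icc {s t : ℝ≥0} (hst : s ≤ t) : denseGrid s t ⊆ Icc s t :=
  insert_subset_iff.2 ⟨⟨hst, le_rfl⟩, fun _ hu => Ioo_subset_Icc_self hu.2⟩

lemma mem_denseGrid_self (s t : ℝ≥0) : t ∈ denseGrid s t :=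
  mem_insert t _

lemma exists_mem_denseGrid_between {s t a b : ℝ≥0} (hsa : s < a) (hab : a < b) (hbt : b ≤ t) :
    ∃ v ∈ denseGrid s t, a < v ∧ v < b := by
  obtain ⟨v, hv, hav, hvb⟩ := (TopologicalSpace.denseRange_denseSeq ℝ≥0).exists_between hab
  exact ⟨v, Or.inr ⟨hv, hsa.trans hav, hvb.trans_le hbt⟩, hav, hvb⟩

lemma le_of_eq_zero_of_forall_le {x : ℝ≥0 → ℝ} {s t u : ℝ≥0} {D : Set ℝ≥0} {ε : ℝ}
    (hx : ContinuousWithinAt x (Ici u) u) (hε : 0 < ε) (hxD : ∀ v ∈ D, ε ≤ x v) (htD : t ∈ D)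
    (hD : ∀ a b, s < a → a < b → b ≤ t → ∃ v ∈ D, a < v ∧ v < b) (hu : x u = 0) (hut : u ≤ t) :
    u ≤ s := by
  by_contra! hsu
  rcases hut.eq_or_lt with rfl | hut
  · linarith [hxD u htD]
  have hsmall : ∀ᶠ v in 𝓝[≥] u, x v < ε := hx.eventually_lt_const (hu ▸ hε)
  obtain ⟨b, hub, hb⟩ := mem_nhdsGE_iff_exists_Ico_subset.1 hsmall
  obtain ⟨v, hvD, huv, hvb⟩ := hD u (min b t) hsu (lt_min hub hut) (min_le_right b t)
  exact (hb ⟨huv.le, hvb.trans_le (min_le_left b t)⟩).not_ge (hxD v hvD)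

def approachesZeroOn (X : ℝ≥0 → Ω → ℝ) (D : Set ℝ≥0) : Set Ω :=
  {ω | ∀ n : ℕ, ∃ u ∈ D, X u ω < 1 / (n + 1)}

lemma lastZero_le_of_notMem_approachesZeroOn {X : ℝ≥0 → Ω → ℝ} {ω : Ω}
    (hrc : ∀ t, ContinuousWithinAt (X · ω) (Ici t) t) {s t : ℝ≥0}
    (hω : ω ∉ approachesZeroOn X (denseGrid s t)) (hg : lastZero X ω ≤ t) : lastZero X ω ≤ s := by
  simp only [approachesZeroOn, mem_ofPred_eq, not_forall, not_exists, not_and, not_lt] at hω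
  obtain ⟨n, hn⟩ := hω
  refine lastZero_le_iff.2 fun u hu => ENNReal.coe_le_coe.2 ?_
  exact le_of_eq_zero_of_forall_le (hrc u) Nat.one_div_pos_of_nat hn (mem_denseGrid_self s t)
    (fun _ _ => exists_mem_denseGrid_between) hu
    (ENNReal.coe_le_coe.1 ((le_lastZero hu).trans hg))

lemma ofReal_setIntegral_le_mul_measure {m0 : MeasurableSpace Ω} {μ : Measure Ω}
    [IsFiniteMeasure μ] {f : Ω → ℝ} (hf : Integrable f μ) {S : Set Ω} (hS : MeasurableSet S)
    {ε : ℝ≥0} (hfS : ∀ ω ∈ S, f ω ≤ ε) :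
    ENNReal.ofReal (∫ ω in S, f ω ∂μ) ≤ ε * μ S := by
  have hle : ∫ ω in S, f ω ∂μ ≤ ∫ _ in S, (ε : ℝ) ∂μ :=
    setIntegral_mono_on hf.integrableOn (integrableOn_const (measure_ne_top μ S)) hS hfS
  rw [setIntegral_const, smul_eq_mul, measureReal_def, mul_comm] at hle
  calc ENNReal.ofReal (∫ ω in S, f ω ∂μ) ≤ ENNReal.ofReal (ε * (μ S).toReal) :=
        ENNReal.ofReal_le_ofReal hle
    _ = ε * μ S := by
        rw [ENNReal.ofReal_mul ε.coe_nonneg, ENNReal.ofReal_toReal (measure_ne_top μ S),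
          ENNReal.ofReal_coe_nnreal]

section AssociatedMeasure

def HasLastZeroDensity {m0 : MeasurableSpace Ω} (ℱ : Filtration ℝ≥0 m0) (P Q : Measure Ω)
    (X : ℝ≥0 → Ω → ℝ) : Prop :=
  ∀ t : ℝ≥0, ∀ Λ : Set Ω, MeasurableSet[ℱ t] Λ →
    Q (Λ ∩ {ω | lastZero X ω ≤ t}) = ENNReal.ofReal (∫ ω in Λ, X t ω ∂P)

variable {m0 : MeasurableSpace Ω} {ℱ : Filtration ℝ≥0 m0} {P Q : Measure Ω} {X : ℝ≥0 → Ω → ℝ}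

lemma measure_exists_lt_inter_lastZero_le_of_finset [IsFiniteMeasure P] (hX : Adapted ℱ X)
    (hXint : ∀ t, Integrable (X t) P) (hQ : HasLastZeroDensity ℱ P Q X)
    {s : ℝ≥0} {T : Finset ℝ≥0} (hsT : ∀ u ∈ T, s ≤ u) (ε : ℝ≥0) :
    Q ({ω | ∃ u ∈ T, X u ω < ε} ∩ {ω | lastZero X ω ≤ s}) ≤ ε * P univ := by
  classical
  -- `Γ u` : the first time of `T` at which `X` drops below `ε` is `u`
  set Γ : ℝ≥0 → Set Ω := fun u =>
    {ω | X u ω < ε} ∩ ⋂ v ∈ T.filter (· < u), {ω | ε ≤ X v ω}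
  have hΓ : ∀ u, MeasurableSet[ℱ u] (Γ u) := fun u =>
    (hX u measurableSet_Iio).inter <| Finset.measurableSet_biInter _ fun v hv =>
      (hX v).mono (ℱ.mono (Finset.mem_filter.1 hv).2.le) le_rfl measurableSet_Ici
  have hcover : {ω | ∃ u ∈ T, X u ω < ε} ⊆ ⋃ u ∈ T, Γ u := by
    rintro ω ⟨u, huT, hu⟩
    have hne : (T.filter (X · ω < ε)).Nonempty := ⟨u, Finset.mem_filter.2 ⟨huT, hu⟩⟩
    obtain ⟨hmT, hm⟩ := Finset.mem_filter.1 (Finset.min'_mem _ hne)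
    refine mem_biUnion hmT ⟨hm, mem_iInter₂.2 fun v hv => ?_⟩
    refine show (ε : ℝ) ≤ X v ω from not_lt.1 fun hvε => ?_
    obtain ⟨hvT, hvm⟩ := Finset.mem_filter.1 hv
    exact hvm.not_ge (Finset.min'_le _ v (Finset.mem_filter.2 ⟨hvT, hvε⟩))
  have hdisj_lt : ∀ u ∈ T, ∀ v, u < v → Disjoint (Γ u) (Γ v) := fun u hu v huv =>
    disjoint_left.2 fun ω hωu hωv =>
      (show (ε : ℝ) ≤ X u ω from mem_iInter₂.1 hωv.2 u (Finset.mem_filter.2 ⟨hu, huv⟩)).not_gt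
        (show X u ω < ε from hωu.1)
  have hdisj : (T : Set ℝ≥0).PairwiseDisjoint Γ := fun u hu v hv huv =>
    huv.lt_or_gt.elim (hdisj_lt u hu v) fun hvu => (hdisj_lt v hv u hvu).symm
  calc Q ({ω | ∃ u ∈ T, X u ω < ε} ∩ {ω | lastZero X ω ≤ s})
      ≤ Q (⋃ u ∈ T, Γ u ∩ {ω | lastZero X ω ≤ u}) := by
        refine measure_mono fun ω ⟨hω, hg⟩ => ?_
        obtain ⟨u, hu, hωu⟩ := mem_iUnion₂.1 (hcover hω)
        exact mem_biUnion hu ⟨hωu, hg.trans (ENNReal.coe_le_coe.2 (hsT u hu))⟩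
    _ ≤ ∑ u ∈ T, Q (Γ u ∩ {ω | lastZero X ω ≤ u}) := measure_biUnion_finset_le _ _
    _ = ∑ u ∈ T, ENNReal.ofReal (∫ ω in Γ u, X u ω ∂P) :=
        Finset.sum_congr rfl fun u _ => hQ u _ (hΓ u)
    _ ≤ ∑ u ∈ T, ε * P (Γ u) := Finset.sum_le_sum fun u _ =>
        ofReal_setIntegral_le_mul_measure (hXint u) (ℱ.le u _ (hΓ u)) fun _ hω => hω.1.le
    _ = ε * P (⋃ u ∈ T, Γ u) := by
        rw [measure_biUnion_finset hdisj fun u _ => ℱ.le u _ (hΓ u), Finset.mul_sum]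
    _ ≤ ε * P univ := by gcongr; exact subset_univ _

lemma measure_exists_lt_inter_lastZero_le [IsFiniteMeasure P] (hX : Adapted ℱ X)
    (hXint : ∀ t, Integrable (X t) P) (hQ : HasLastZeroDensity ℱ P Q X)
    {s : ℝ≥0} {D : Set ℝ≥0} (hD : D.Countable) (hsD : ∀ u ∈ D, s ≤ u) (ε : ℝ≥0) :
    Q ({ω | ∃ u ∈ D, X u ω < ε} ∩ {ω | lastZero X ω ≤ s}) ≤ ε * P univ := by
  have := hD.to_subtype
  have hunion : {ω | ∃ u ∈ D, X u ω < ε} =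
      ⋃ T : Finset D, {ω | ∃ u ∈ T.map (Function.Embedding.subtype _), X u ω < ε} := by
    ext ω
    simp only [mem_iUnion, mem_ofPred_eq, Finset.mem_map, Function.Embedding.subtype_apply]
    exact ⟨fun ⟨u, hu, h⟩ => ⟨{⟨u, hu⟩}, u, ⟨⟨u, hu⟩, Finset.mem_singleton_self _, rfl⟩, h⟩,
      fun ⟨_, u, ⟨v, _, hvu⟩, h⟩ => ⟨u, hvu ▸ v.2, h⟩⟩
  have hdir : Directed (· ⊆ ·) fun T : Finset D =>
      {ω | ∃ u ∈ T.map (Function.Embedding.subtype _), X u ω < ε} ∩ {ω | lastZero X ω ≤ s} :=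
    Monotone.directed_le fun T T' hTT' => inter_subset_inter_left _
      fun ω ⟨u, hu, h⟩ => ⟨u, Finset.map_subset_map.2 hTT' hu, h⟩
  rw [hunion, iUnion_inter, hdir.measure_iUnion]
  refine iSup_le fun T => measure_exists_lt_inter_lastZero_le_of_finset hX hXint hQ ?_ ε
  simp only [Finset.mem_map, Function.Embedding.subtype_apply]
  rintro _ ⟨u, -, rfl⟩
  exact hsD u u.2

lemma measurableSet_approachesZeroOn (hX : Adapted ℱ X) {D : Set ℝ≥0} (hD : D.Countable)
    {t : ℝ≥0} (hDt : ∀ u ∈ D, u ≤ t) : MeasurableSet[ℱ t] (approachesZeroOn X D) := by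
  have hZ : approachesZeroOn X D = ⋂ n : ℕ, ⋃ u ∈ D, {ω | X u ω < 1 / (n + 1)} := by
    ext ω
    simp [approachesZeroOn]
  rw [hZ]
  exact .iInter fun n => .biUnion hD fun u hu =>
    (hX u).mono (ℱ.mono (hDt u hu)) le_rfl measurableSet_Iio

lemma measure_approachesZeroOn_inter_lastZero_le [IsFiniteMeasure P] (hX : Adapted ℱ X)
    (hXint : ∀ t, Integrable (X t) P) (hQ : HasLastZeroDensity ℱ P Q X)
    {s : ℝ≥0} {D : Set ℝ≥0} (hD : D.Countable) (hsD : ∀ u ∈ D, s ≤ u) :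
    Q (approachesZeroOn X D ∩ {ω | lastZero X ω ≤ s}) = 0 := by
  have hbound : ∀ ε : ℝ≥0, 0 < ε →
      Q (approachesZeroOn X D ∩ {ω | lastZero X ω ≤ s}) ≤ ε * P univ := fun ε hε => by
    refine (measure_mono (inter_subset_inter_left _ fun ω hω => ?_)).trans
      (measure_exists_lt_inter_lastZero_le hX hXint hQ hD hsD ε)
    obtain ⟨n, hn⟩ := exists_nat_one_div_lt (NNReal.coe_pos.2 hε)
    obtain ⟨u, hu, hXu⟩ := hω n
    exact ⟨u, hu, hXu.trans hn⟩
  have hlim : Tendsto (fun ε : ℝ≥0 => (ε : ℝ≥0∞) * P univ) (𝓝[>] 0) (𝓝 0) := by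
    simpa using ENNReal.Tendsto.mul_const
      ((ENNReal.continuous_coe.tendsto 0).mono_left nhdsWithin_le_nhds)
      (Or.inr (measure_ne_top P univ))
  exact le_antisymm (ge_of_tendsto hlim (eventually_nhdsWithin_of_forall hbound)) bot_le

lemma measure_inter_lastZero_le_eq [IsFiniteMeasure P]
    (hrc : ∀ ω t, ContinuousWithinAt (X · ω) (Ici t) t) (hX : Adapted ℱ X)
    (hXint : ∀ t, Integrable (X t) P) (hQ : HasLastZeroDensity ℱ P Q X)
    {s t : ℝ≥0} (hst : s ≤ t) {Λ : Set Ω} (hΛ : MeasurableSet[ℱ t] Λ) :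
    Q (Λ ∩ {ω | lastZero X ω ≤ s}) =
      ENNReal.ofReal (∫ ω in Λ \ approachesZeroOn X (denseGrid s t), X t ω ∂P) := by
  set Z := approachesZeroOn X (denseGrid s t)
  have hZ : MeasurableSet[ℱ t] Z := measurableSet_approachesZeroOn hX (countable_denseGrid s t)
    fun u hu => (denseGrid_subset_Icc hst hu).2
  have hZnull : Q (Z ∩ {ω | lastZero X ω ≤ s}) = 0 :=
    measure_approachesZeroOn_inter_lastZero_le hX hXint hQ (countable_denseGrid s t)
      fun u hu => (denseGrid_subset_Icc hst hu).1
  rw [← hQ t _ (hΛ.diff hZ)]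
  refine le_antisymm ?_ (measure_mono fun ω ⟨⟨hωΛ, hωZ⟩, hg⟩ =>
    ⟨hωΛ, lastZero_le_of_notMem_approachesZeroOn (hrc ω) hωZ hg⟩)
  calc Q (Λ ∩ {ω | lastZero X ω ≤ s})
      ≤ Q ((Λ \ Z) ∩ {ω | lastZero X ω ≤ t} ∪ Z ∩ {ω | lastZero X ω ≤ s}) := by
        refine measure_mono fun ω ⟨hωΛ, hg⟩ => ?_
        by_cases hωZ : ω ∈ Z
        · exact Or.inr ⟨hωZ, hg⟩
        · exact Or.inl ⟨⟨hωΛ, hωZ⟩, hg.trans (ENNReal.coe_le_coe.2 hst)⟩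
    _ ≤ Q ((Λ \ Z) ∩ {ω | lastZero X ω ≤ t}) + Q (Z ∩ {ω | lastZero X ω ≤ s}) :=
        measure_union_le _ _
    _ = Q ((Λ \ Z) ∩ {ω | lastZero X ω ≤ t}) := by rw [hZnull, add_zero]

lemma restrict_lastZero_le_eq [IsFiniteMeasure P] {Q' : Measure Ω}
    (hgen : (⨆ t : ℝ≥0, (ℱ t : MeasurableSpace Ω)) = m0)
    (hrc : ∀ ω t, ContinuousWithinAt (X · ω) (Ici t) t) (hX : Adapted ℱ X)
    (hXint : ∀ t, Integrable (X t) P) (hQ : HasLastZeroDensity ℱ P Q X)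
    (hQ' : HasLastZeroDensity ℱ P Q' X)
    (s : ℝ≥0) :
    Q.restrict {ω | lastZero X ω ≤ s} = Q'.restrict {ω | lastZero X ω ≤ s} := by
  have hfin : IsFiniteMeasure (Q.restrict {ω | lastZero X ω ≤ s}) := by
    rw [isFiniteMeasure_restrict, ← univ_inter {ω | lastZero X ω ≤ s}, hQ s univ .univ]
    exact ENNReal.ofReal_ne_top
  refine ext_of_generate_finite (⋃ t, {Λ | MeasurableSet[ℱ t] Λ})
    ((MeasurableSpace.generateFrom_iUnion_measurableSet _).trans hgen).symm
    (isPiSystem_iUnion_of_monotone _ (fun t => @MeasurableSpace.isPiSystem_measurableSet Ω (ℱ t))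
      fun _ _ h => ℱ.mono h) (fun Λ hΛ => ?_) ?_
  · obtain ⟨u, hΛ⟩ := mem_iUnion.1 hΛ
    have hΛ' : MeasurableSet[ℱ (max u s)] Λ := ℱ.mono (le_max_left u s) _ hΛ
    rw [Measure.restrict_apply (ℱ.le u _ hΛ), Measure.restrict_apply (ℱ.le u _ hΛ),
      measure_inter_lastZero_le_eq hrc hX hXint hQ (le_max_right u s) hΛ',
      measure_inter_lastZero_le_eq hrc hX hXint hQ' (le_max_right u s) hΛ']
  · rw [Measure.restrict_apply .univ, Measure.restrict_apply .univ, hQ s univ .univ,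
      hQ' s univ .univ]

end AssociatedMeasure

end ClassSigmaUniqueness

open ClassSigmaUniqueness in
theorem uniqueness_of_associated_measure_general
    {m0 : MeasurableSpace Ω} (ℱ : Filtration ℝ≥0 m0) (P : Measure Ω)
    [IsProbabilityMeasure P]
    (hgen : (⨆ t : ℝ≥0, (ℱ t : MeasurableSpace Ω)) = m0)
    (X N A : ℝ≥0 → Ω → ℝ) (hX : ClassSigma ℱ P X N A)
    (Q Q' : Measure Ω)
    (hQ : AssociatedMeasure ℱ P Q X) (hQ' : AssociatedMeasure ℱ P Q' X) :
    Q = Q' := by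
  obtain ⟨-, hQnull, hQ⟩ := hQ
  obtain ⟨-, hQ'null, hQ'⟩ := hQ'
  have hagree : ∀ n : ℕ, Q.restrict {ω | lastZero X ω ≤ (n : ℝ≥0)} =
      Q'.restrict {ω | lastZero X ω ≤ (n : ℝ≥0)} := fun n =>
    restrict_lastZero_le_eq hgen (fun ω => (hX.cadlagX ω).1) hX.subm.stronglyAdapted.adapted
      hX.subm.integrable hQ hQ' n
  have hfinite : ∀ μ : Measure Ω, μ {ω | lastZero X ω = ∞} = 0 →
      μ.restrict {ω | lastZero X ω ≠ ∞} = μ := fun μ hμ =>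
    Measure.restrict_eq_self_of_ae_mem (ae_iff.2 (by simpa using hμ))
  rw [← hfinite Q hQnull, ← hfinite Q' hQ'null, ← iUnion_lastZero_le_natCast]
  exact Measure.restrict_iUnion_congr.2 hagree

/-- Uniqueness of the σ-finite measure associated with a submartingale of class `(Σ)`. -/
theorem uniqueness_of_associated_measure
    {m0 : MeasurableSpace Ω} (ℱ : Filtration ℝ≥0 m0) (P : Measure Ω)
    [IsProbabilityMeasure P]
    (hnat : NaturalConditions ℱ P)
    (hgen : (⨆ t : ℝ≥0, (ℱ t : MeasurableSpace Ω)) = m0)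
    (X N A : ℝ≥0 → Ω → ℝ) (hX : ClassSigma ℱ P X N A)
    (Q Q' : Measure Ω)
    (hQ : AssociatedMeasure ℱ P Q X) (hQ' : AssociatedMeasure ℱ P Q' X) :
    Q = Q' :=
  uniqueness_of_associated_measure_general ℱ P hgen X N A hX Q Q' hQ hQ'
end
end

section
/- Let X be of class (Σ), let Q be the measure associated with X, let F be a nonnegative Q-integrable functional and let (M_t(F))_{t≥0} be a density martingale of F. Then P-almost surely, on the event {A_∞ = ∞}, M_t(F) → 0 as t → ∞. -/
open MeasureTheory Filter Set
open scoped NNReal ENNReal Topology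

noncomputable section

variable {Ω : Type*}

open scoped symmDiff

/-!
Fix a dense sequence of times `u`. If `A_∞ = ∞`, then, since `dA` is carried by the zeros of
`X`, the path of `X` vanishes at arbitrarily late times, so by right-continuity it is arbitrarily
small at arbitrarily late times `u i`; call this event `G`. A first-entry decomposition along
finitely many times turns `Q(X_t < δ for some late t, g ≤ n)` into a sum of terms
`E_P[X_t; X_t < δ, first entry at t] ≤ δ P(first entry at t)`, so `Q(G) = 0` and `ν := F · Q`
does not charge `G`. The same decomposition over the entrance times of `M` above `δ` gives
`δ P(Λ ∩ {M_{u i} > δ for arbitrarily late i}) ≤ ν(Λ)` for `Λ ∈ ℱ_t`, which extends by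
approximation to every `Λ ∈ ⋁_t ℱ_t`, in particular to `G`. Hence `P`-a.s. on `G` the martingale
is eventually below every `δ > 0` along `u`, and then at all late times by right-continuity.
-/

theorem DenseRange.exists_gt_mem_of_mem_nhdsGE {α ι : Type*} [TopologicalSpace α] [LinearOrder α]
    [OrderTopology α] [DenselyOrdered α] [NoMaxOrder α] {u : ι → α} (hu : DenseRange u)
    {t : α} {S : Set α} (hS : S ∈ 𝓝[≥] t) : ∃ i, t < u i ∧ u i ∈ S := by
  obtain ⟨c, htc, hcS⟩ :=
    mem_nhdsGT_iff_exists_Ioo_subset.1 (nhdsWithin_mono t Ioi_subset_Ici_self hS)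
  obtain ⟨i, hi⟩ := hu.exists_mem_open isOpen_Ioo (nonempty_Ioo.2 htc)
  exact ⟨i, hi.1, hcS hi⟩

theorem DenseRange.apply_mem_of_isClosed {α ι : Type*} [TopologicalSpace α] [LinearOrder α]
    [OrderTopology α] [DenselyOrdered α] [NoMaxOrder α] {β : Type*} [TopologicalSpace β]
    {u : ι → α} (hu : DenseRange u) {φ : α → β} {t : α} (hφ : Tendsto φ (𝓝[≥] t) (𝓝 (φ t)))
    {K : Set β} (hK : IsClosed K) (h : ∀ i, t < u i → φ (u i) ∈ K) : φ t ∈ K := by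
  by_contra hφt
  obtain ⟨i, hti, hiK⟩ := hu.exists_gt_mem_of_mem_nhdsGE (hφ (hK.isOpen_compl.mem_nhds hφt))
  exact hiK (h i hti)

section FirstEntry

variable {m0 : MeasurableSpace Ω} {ι κ : Type*} [LinearOrder κ] {ℱ : Filtration κ m0}
  {μ ρ : Measure Ω} {τ : ι → κ} {E : ι → Set Ω}

theorem measure_biUnion_finset_le_of_adapted (hE : ∀ i, MeasurableSet[ℱ (τ i)] (E i))
    (hle : ∀ i Γ, MeasurableSet[ℱ (τ i)] Γ → Γ ⊆ E i → μ Γ ≤ ρ Γ) (s : Finset ι) :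
    μ (⋃ i ∈ s, E i) ≤ ρ (⋃ i ∈ s, E i) := by
  classical
  induction s using Finset.induction_on_max_value τ with
  | empty => simp
  | insert a s _ hmax ih =>
    set U := ⋃ i ∈ s, E i
    have hU : MeasurableSet[ℱ (τ a)] U :=
      Finset.measurableSet_biUnion s fun i hi => ℱ.mono (hmax i hi) _ (hE i)
    -- `E a \ U`: the `E i` are first entered at the latest time `τ a`, an `ℱ (τ a)`-event.
    have hnew : MeasurableSet[ℱ (τ a)] (E a \ U) := (hE a).diff hU
    have hsplit : ∀ ν : Measure Ω, ν (⋃ i ∈ insert a s, E i) = ν U + ν (E a \ U) := fun ν => by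
      rw [Finset.set_biUnion_insert, union_comm, ← union_sdiff_self,
        measure_union disjoint_sdiff_right (ℱ.le _ _ hnew)]
    rw [hsplit, hsplit]
    exact add_le_add ih (hle a _ hnew sdiff_subset)

theorem measure_iUnion_le_of_adapted [Countable ι] (hE : ∀ i, MeasurableSet[ℱ (τ i)] (E i))
    (hle : ∀ i Γ, MeasurableSet[ℱ (τ i)] Γ → Γ ⊆ E i → μ Γ ≤ ρ Γ) :
    μ (⋃ i, E i) ≤ ρ (⋃ i, E i) := by
  have hdir : Directed (· ⊆ ·) fun s : Finset ι => ⋃ i ∈ s, E i :=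
    directed_of_isDirected_le fun s t hst => biUnion_subset_biUnion_left hst
  rw [iUnion_eq_iUnion_finset, hdir.measure_iUnion]
  exact iSup_le fun s => (measure_biUnion_finset_le_of_adapted hE hle s).trans
    (measure_mono (subset_iUnion (fun s : Finset ι => ⋃ i ∈ s, E i) s))

end FirstEntry

section DirectedFiltration

variable {m0 : MeasurableSpace Ω} {ι : Type*} [Preorder ι] [IsDirectedOrder ι] [Nonempty ι]

theorem MeasureTheory.Filtration.isSetRing_iUnion_measurableSet (ℱ : Filtration ι m0) :
    IsSetRing (⋃ i, {s | MeasurableSet[ℱ i] s}) := by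
  have hcommon : ∀ {s t}, s ∈ ⋃ i, {s | MeasurableSet[ℱ i] s} →
      t ∈ ⋃ i, {s | MeasurableSet[ℱ i] s} → ∃ k, MeasurableSet[ℱ k] s ∧ MeasurableSet[ℱ k] t := by
    intro s t hs ht
    obtain ⟨i, hi⟩ := mem_iUnion.1 hs
    obtain ⟨j, hj⟩ := mem_iUnion.1 ht
    obtain ⟨k, hik, hjk⟩ := directed_of (· ≤ ·) i j
    exact ⟨k, ℱ.mono hik _ hi, ℱ.mono hjk _ hj⟩
  refine ⟨mem_iUnion.2 ⟨Classical.arbitrary ι, @MeasurableSet.empty _ (ℱ _)⟩,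
    fun s t hs ht => ?_, fun s t hs ht => ?_⟩
  all_goals obtain ⟨k, hsk, htk⟩ := hcommon hs ht
  exacts [mem_iUnion.2 ⟨k, hsk.union htk⟩, mem_iUnion.2 ⟨k, hsk.diff htk⟩]

theorem MeasureTheory.Filtration.measure_le_of_forall_le {ℱ : Filtration ι m0} {μ ν : Measure Ω}
    [IsFiniteMeasure μ] [IsFiniteMeasure ν] (h : ∀ i s, MeasurableSet[ℱ i] s → μ s ≤ ν s)
    {s : Set Ω} (hs : MeasurableSet[⨆ i, ℱ i] s) : μ s ≤ ν s := by
  have hle : (⨆ i, ℱ i : MeasurableSpace Ω) ≤ m0 := iSup_le ℱ.le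
  have hCm : ∀ t ∈ ⋃ i, {s | MeasurableSet[ℱ i] s}, MeasurableSet[⨆ i, ℱ i] t := fun t ht => by
    obtain ⟨i, hi⟩ := mem_iUnion.1 ht
    exact le_iSup (fun i => (ℱ i : MeasurableSpace Ω)) i _ hi
  refine ENNReal.le_of_forall_pos_le_add fun ε hε _ => ?_
  obtain ⟨t, htC, hts⟩ := exists_measure_symmDiff_lt_of_generateFrom_isSetRing
    (mα := ⨆ i, ℱ i) (μ := (μ + ν).trim hle) ℱ.isSetRing_iUnion_measurableSet
    ⟨{univ}, countable_singleton _, by simp, by simp⟩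
    (MeasurableSpace.generateFrom_iUnion_measurableSet _).symm hs (ENNReal.coe_pos.2 hε)
  rw [trim_measurableSet_eq hle ((hCm t htC).symmDiff hs), Measure.add_apply] at hts
  obtain ⟨i, hti⟩ := mem_iUnion.1 htC
  calc μ s ≤ μ t + μ (t ∆ s) := by
        rw [symmDiff_comm, add_comm, ← tsub_le_iff_right]; exact le_measure_symmDiff
    _ ≤ ν t + μ (t ∆ s) := add_le_add (h i t hti) le_rfl
    _ ≤ ν s + ν (t ∆ s) + μ (t ∆ s) :=
        add_le_add (by rw [← tsub_le_iff_left]; exact le_measure_symmDiff) le_rfl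
    _ = ν s + (μ (t ∆ s) + ν (t ∆ s)) := by ring
    _ ≤ ν s + ε := add_le_add le_rfl hts.le

end DirectedFiltration

def frequentlyAlong (u : ℕ → ℝ≥0) (p : ℝ≥0 → Ω → Prop) : Set Ω :=
  {ω | ∀ n : ℕ, ∃ i, (n : ℝ≥0) ≤ u i ∧ p (u i) ω}

section FrequentlyAlong

variable {m0 : MeasurableSpace Ω} {ℱ : Filtration ℝ≥0 m0} {u : ℕ → ℝ≥0} {p : ℝ≥0 → Ω → Prop}

theorem frequentlyAlong_subset_iUnion (n : ℕ) :
    frequentlyAlong u p ⊆ ⋃ i : {i // (n : ℝ≥0) ≤ u i}, {ω | p (u i) ω} := fun ω hω => by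
  obtain ⟨i, hni, hi⟩ := hω n
  exact mem_iUnion.2 ⟨⟨i, hni⟩, hi⟩

theorem measurableSet_frequentlyAlong (hp : ∀ t, MeasurableSet[ℱ t] {ω | p t ω}) :
    MeasurableSet[⨆ t, ℱ t] (frequentlyAlong u p) := by
  simp only [frequentlyAlong, ofPred_forall, ofPred_exists, ofPred_and]
  exact .iInter fun n => .iUnion fun i => (MeasurableSet.const _).inter
    (le_iSup (fun t => (ℱ t : MeasurableSpace Ω)) (u i) _ (hp (u i)))

end FrequentlyAlong

section AssociatedMeasure

variable {m0 : MeasurableSpace Ω} {ℱ : Filtration ℝ≥0 m0} {P Q : Measure Ω} [IsFiniteMeasure P]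
  {X : ℝ≥0 → Ω → ℝ} {u : ℕ → ℝ≥0}

theorem AssociatedMeasure.measure_inter_lastZero_le (hQ : AssociatedMeasure ℱ P Q X)
    {n t : ℝ≥0} (hnt : n ≤ t) (hXt : Integrable (X t) P) {δ : ℝ} {Γ : Set Ω}
    (hΓ : MeasurableSet[ℱ t] Γ) (hΓX : Γ ⊆ {ω | X t ω < δ}) :
    Q (Γ ∩ {ω | lastZero X ω ≤ n}) ≤ ENNReal.ofReal δ * P Γ := by
  calc Q (Γ ∩ {ω | lastZero X ω ≤ n}) ≤ Q (Γ ∩ {ω | lastZero X ω ≤ t}) :=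
        measure_mono (inter_subset_inter_right _
          fun ω (hω : lastZero X ω ≤ n) => hω.trans (ENNReal.coe_le_coe.2 hnt))
    _ = ENNReal.ofReal (∫ ω in Γ, X t ω ∂P) := hQ.2.2 t Γ hΓ
    _ ≤ ENNReal.ofReal (∫ _ in Γ, δ ∂P) := ENNReal.ofReal_le_ofReal <|
        setIntegral_mono_on hXt.integrableOn (integrableOn_const (measure_ne_top _ _))
          (ℱ.le t _ hΓ) fun ω hω => (hΓX hω).le
    _ = ENNReal.ofReal δ * P Γ := by
        rw [setIntegral_const, smul_eq_mul, mul_comm, ENNReal.ofReal_mul' measureReal_nonneg,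
          ofReal_measureReal]

theorem AssociatedMeasure.measure_iUnion_lt_inter_lastZero_le (hQ : AssociatedMeasure ℱ P Q X)
    (hXad : Adapted ℱ X) (hX : ∀ t, Integrable (X t) P) (δ : ℝ) (n : ℝ≥0) :
    Q ((⋃ i : {i // n ≤ u i}, {ω | X (u i) ω < δ}) ∩ {ω | lastZero X ω ≤ n}) ≤
      ENNReal.ofReal δ * P univ := by
  have hle : ∀ (i : {i // n ≤ u i}) Γ, MeasurableSet[ℱ (u i)] Γ → Γ ⊆ {ω | X (u i) ω < δ} →
      Q.restrict {ω | lastZero X ω ≤ n} Γ ≤ (ENNReal.ofReal δ • P) Γ := fun i Γ hΓ hΓX => by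
    rw [Measure.restrict_apply (ℱ.le _ _ hΓ), Measure.smul_apply (R := ℝ≥0∞), smul_eq_mul]
    exact hQ.measure_inter_lastZero_le i.2 (hX _) hΓ hΓX
  calc _ ≤ Q.restrict {ω | lastZero X ω ≤ n} (⋃ i : {i // n ≤ u i}, {ω | X (u i) ω < δ}) :=
        Measure.le_restrict_apply _ _
    _ ≤ (ENNReal.ofReal δ • P) (⋃ i : {i // n ≤ u i}, {ω | X (u i) ω < δ}) :=
        measure_iUnion_le_of_adapted (fun i => hXad (u i) measurableSet_Iio) hle
    _ ≤ ENNReal.ofReal δ * P univ := by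
        rw [Measure.smul_apply (R := ℝ≥0∞), smul_eq_mul]
        exact mul_le_mul_right (measure_mono (subset_univ _)) _

theorem AssociatedMeasure.measure_frequentlyAlong_lt_eq_zero (hQ : AssociatedMeasure ℱ P Q X)
    (hXad : Adapted ℱ X) (hX : ∀ t, Integrable (X t) P) :
    Q (⋂ k : ℕ, frequentlyAlong u fun t ω => X t ω < 1 / (k + 1)) = 0 := by
  set G := ⋂ k : ℕ, frequentlyAlong u fun t ω => X t ω < 1 / (k + 1)
  have hfinite : ∀ n : ℕ, Q (G ∩ {ω | lastZero X ω ≤ (n : ℝ≥0)}) = 0 := by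
    intro n
    have hbound : ∀ k : ℕ, Q (G ∩ {ω | lastZero X ω ≤ (n : ℝ≥0)}) ≤
        ENNReal.ofReal (1 / (k + 1)) * P univ := fun k =>
      (measure_mono (inter_subset_inter_left _ ((iInter_subset _ k).trans
        (frequentlyAlong_subset_iUnion n)))).trans
        (hQ.measure_iUnion_lt_inter_lastZero_le hXad hX _ _)
    have hlim : Tendsto (fun k : ℕ => ENNReal.ofReal (1 / (k + 1)) * P univ) atTop (𝓝 0) := by
      simpa using ENNReal.Tendsto.mul_const
        (ENNReal.tendsto_ofReal tendsto_one_div_add_atTop_nhds_zero_nat)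
        (Or.inr (measure_ne_top P univ))
    exact nonpos_iff_eq_zero.1 (ge_of_tendsto' hlim hbound)
  have hcover : G ⊆ (⋃ n : ℕ, G ∩ {ω | lastZero X ω ≤ (n : ℝ≥0)}) ∪ {ω | lastZero X ω = ∞} := by
    intro ω hω
    by_cases hg : lastZero X ω = ∞
    · exact Or.inr hg
    · obtain ⟨n, hn⟩ := ENNReal.exists_nat_gt hg
      exact Or.inl (mem_iUnion.2 ⟨n, hω, by simpa using hn.le⟩)
  exact measure_mono_null hcover (measure_union_null (measure_iUnion_null hfinite) hQ.2.1)

end AssociatedMeasure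

section DensityMartingale

variable {m0 : MeasurableSpace Ω} {ℱ : Filtration ℝ≥0 m0} {P Q : Measure Ω} [IsFiniteMeasure P]
  {F : Ω → ℝ} {M : ℝ≥0 → Ω → ℝ} {u : ℕ → ℝ≥0}

theorem DensityMartingale.ofReal_mul_measure_le_withDensity (hM : DensityMartingale ℱ P Q F M)
    (hF : ∀ ω, 0 ≤ F ω) (hFint : Integrable F Q) {t : ℝ≥0} {δ : ℝ} {Γ : Set Ω}
    (hΓ : MeasurableSet[ℱ t] Γ) (hΓM : Γ ⊆ {ω | δ < M t ω}) :
    ENNReal.ofReal δ * P Γ ≤ Q.withDensity (fun ω => ENNReal.ofReal (F ω)) Γ := by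
  rw [withDensity_apply _ (ℱ.le t _ hΓ), ← ofReal_integral_eq_lintegral_ofReal
    hFint.integrableOn (ae_of_all _ hF), hM.2.2.2 t Γ hΓ, ← ofReal_measureReal,
    ← ENNReal.ofReal_mul' measureReal_nonneg]
  exact ENNReal.ofReal_le_ofReal (setIntegral_ge_of_const_le_real (ℱ.le t _ hΓ)
    (measure_ne_top _ _) (fun ω hω => (hΓM hω).le) (hM.1.integrable t).integrableOn)

theorem DensityMartingale.ofReal_mul_measure_inter_frequentlyAlong_le
    (hM : DensityMartingale ℱ P Q F M) (hF : ∀ ω, 0 ≤ F ω) (hFint : Integrable F Q)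
    {m : ℝ≥0} {Λ : Set Ω} (hΛ : MeasurableSet[ℱ m] Λ) (δ : ℝ) :
    ENNReal.ofReal δ * P (Λ ∩ frequentlyAlong u fun t ω => δ < M t ω) ≤
      Q.withDensity (fun ω => ENNReal.ofReal (F ω)) Λ := by
  obtain ⟨n, hmn⟩ := exists_nat_ge m
  set E : {i // (n : ℝ≥0) ≤ u i} → Set Ω := fun i => Λ ∩ {ω | δ < M (u i) ω}
  have hE : ∀ i : {i // (n : ℝ≥0) ≤ u i}, MeasurableSet[ℱ (u i)] (E i) := fun i =>
    (ℱ.mono (hmn.trans i.2) _ hΛ).inter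
      (measurableSet_lt measurable_const (hM.1.stronglyAdapted _).measurable)
  have hle : ∀ (i : {i // (n : ℝ≥0) ≤ u i}) Γ, MeasurableSet[ℱ (u i)] Γ → Γ ⊆ E i →
      (ENNReal.ofReal δ • P) Γ ≤ Q.withDensity (fun ω => ENNReal.ofReal (F ω)) Γ :=
    fun i Γ hΓ hΓE => hM.ofReal_mul_measure_le_withDensity hF hFint hΓ
      (hΓE.trans inter_subset_right)
  calc ENNReal.ofReal δ * P (Λ ∩ frequentlyAlong u fun t ω => δ < M t ω)
      ≤ (ENNReal.ofReal δ • P) (⋃ i, E i) := by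
        rw [Measure.smul_apply (R := ℝ≥0∞), smul_eq_mul, ← inter_iUnion]
        exact mul_le_mul_right (measure_mono (inter_subset_inter_right _
          (frequentlyAlong_subset_iUnion n))) _
    _ ≤ Q.withDensity (fun ω => ENNReal.ofReal (F ω)) (⋃ i, E i) :=
        measure_iUnion_le_of_adapted hE hle
    _ ≤ Q.withDensity (fun ω => ENNReal.ofReal (F ω)) Λ :=
        measure_mono (iUnion_subset fun _ => inter_subset_left)

theorem DensityMartingale.measure_inter_frequentlyAlong_eq_zero
    (hM : DensityMartingale ℱ P Q F M) (hF : ∀ ω, 0 ≤ F ω) (hFint : Integrable F Q)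
    {G : Set Ω} (hG : MeasurableSet[⨆ t, ℱ t] G) (hQG : Q G = 0) {δ : ℝ} (hδ : 0 < δ) :
    P (G ∩ frequentlyAlong u fun t ω => δ < M t ω) = 0 := by
  set B := frequentlyAlong u fun t ω => δ < M t ω
  have := isFiniteMeasure_withDensity_ofReal hFint.hasFiniteIntegral
  have := (P.restrict B).smul_finite (ENNReal.ofReal_ne_top (r := δ))
  have hle := Filtration.measure_le_of_forall_le (μ := ENNReal.ofReal δ • P.restrict B)
    (ν := Q.withDensity fun ω => ENNReal.ofReal (F ω)) (fun m Λ hΛ => by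
      rw [Measure.smul_apply (R := ℝ≥0∞), smul_eq_mul, Measure.restrict_apply (ℱ.le m _ hΛ)]
      exact hM.ofReal_mul_measure_inter_frequentlyAlong_le hF hFint hΛ δ) hG
  rw [Measure.smul_apply (R := ℝ≥0∞), smul_eq_mul, Measure.restrict_apply (iSup_le ℱ.le _ hG),
    withDensity_absolutelyContinuous _ _ hQG, nonpos_iff_eq_zero, mul_eq_zero] at hle
  exact hle.resolve_left (ENNReal.ofReal_pos.2 hδ).ne'

end DensityMartingale

theorem exists_ge_eq_zero_of_tendsto_atTop {a x : ℝ≥0 → ℝ}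
    (hcarried : ∀ s t, s ≤ t → (∀ r ∈ Icc s t, x r ≠ 0) → a t = a s)
    (ha : Tendsto a atTop atTop) (n : ℝ≥0) : ∃ t, n ≤ t ∧ x t = 0 := by
  by_contra! hx
  obtain ⟨t, hat, hnt⟩ := ((ha.eventually_gt_atTop (a n)).and (eventually_ge_atTop n)).exists
  exact hat.ne' (hcarried n t hnt fun r hr => hx r hr.1)

section DenseSequence

variable {u : ℕ → ℝ≥0} {φ : ℝ≥0 → ℝ}

theorem DenseRange.mem_frequentlyAlong_lt_of_frequently_zero (hu : DenseRange u)
    {X : ℝ≥0 → Ω → ℝ} {ω : Ω} (hX : ∀ t, Tendsto (fun s => X s ω) (𝓝[≥] t) (𝓝 (X t ω)))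
    (hzero : ∀ n, ∃ t, n ≤ t ∧ X t ω = 0) {r : ℝ} (hr : 0 < r) :
    ω ∈ frequentlyAlong u fun t ω => X t ω < r := fun n => by
  obtain ⟨t, hnt, ht⟩ := hzero n
  obtain ⟨i, hti, hi⟩ := hu.exists_gt_mem_of_mem_nhdsGE (hX t (Iio_mem_nhds (ht ▸ hr)))
  exact ⟨i, hnt.trans hti.le, hi⟩

theorem DenseRange.tendsto_zero_of_eventually_le (hu : DenseRange u)
    (hφ : ∀ t, Tendsto φ (𝓝[≥] t) (𝓝 (φ t))) (hnonneg : ∀ i, 0 ≤ φ (u i))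
    (hsmall : ∀ k : ℕ, ∃ n : ℕ, ∀ i, (n : ℝ≥0) ≤ u i → φ (u i) ≤ 1 / (k + 1)) :
    Tendsto φ atTop (𝓝 0) := by
  refine Metric.tendsto_atTop.2 fun ε hε => ?_
  obtain ⟨k, hk⟩ := exists_nat_one_div_lt hε
  obtain ⟨n, hn⟩ := hsmall k
  refine ⟨n, fun t hnt => ?_⟩
  have hφt : φ t ∈ Icc (0 : ℝ) (1 / (k + 1)) := hu.apply_mem_of_isClosed (hφ t) isClosed_Icc
    fun i hti => ⟨hnonneg i, hn i (hnt.trans hti.le)⟩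
  rw [Real.dist_eq, sub_zero, abs_of_nonneg hφt.1]
  exact hφt.2.trans_lt hk

end DenseSequence

theorem density_martingale_tendsto_zero_on_Ainf_infinite_general
    {m0 : MeasurableSpace Ω} (ℱ : Filtration ℝ≥0 m0) (P : Measure Ω)
    [IsProbabilityMeasure P]
    (X N A : ℝ≥0 → Ω → ℝ) (hX : ClassSigma ℱ P X N A)
    (Q : Measure Ω) (hQ : AssociatedMeasure ℱ P Q X)
    (F : Ω → ℝ) (hF_nonneg : ∀ ω, 0 ≤ F ω) (hF_int : Integrable F Q)
    (M : ℝ≥0 → Ω → ℝ) (hM : DensityMartingale ℱ P Q F M) :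
    ∀ᵐ ω ∂P, Tendsto (fun t => A t ω) atTop atTop →
      Tendsto (fun t => M t ω) atTop (nhds 0) := by
  obtain ⟨u, hu⟩ := TopologicalSpace.exists_dense_seq ℝ≥0
  set G := ⋂ k : ℕ, frequentlyAlong u fun t ω => X t ω < 1 / (k + 1)
  have hXad : Adapted ℱ X := hX.subm.stronglyAdapted.adapted
  have hG : MeasurableSet[⨆ t, ℱ t] G := .iInter fun k =>
    measurableSet_frequentlyAlong fun t => hXad t measurableSet_Iio
  have hQG : Q G = 0 := hQ.measure_frequentlyAlong_lt_eq_zero hXad hX.subm.integrable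
  have hPG : ∀ k : ℕ, P (G ∩ frequentlyAlong u fun t ω => 1 / (k + 1) < M t ω) = 0 :=
    fun k => hM.measure_inter_frequentlyAlong_eq_zero hF_nonneg hF_int hG hQG (by positivity)
  filter_upwards [hX.carriedA, ae_all_iff.2 fun i => hM.2.1 (u i),
    ae_all_iff.2 fun k => measure_eq_zero_iff_ae_notMem.1 (hPG k)] with ω hcarried hMnonneg hPGω hA
  have hωG : ω ∈ G := mem_iInter.2 fun k => hu.mem_frequentlyAlong_lt_of_frequently_zero
    (hX.cadlagX ω).1 (exists_ge_eq_zero_of_tendsto_atTop hcarried hA) (by positivity)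
  refine hu.tendsto_zero_of_eventually_le (hM.2.2.1 ω).1 hMnonneg fun k => ?_
  simpa [frequentlyAlong] using not_and.1 (hPGω k) hωG

/-- On the event `{A_∞ = ∞}`, any density martingale `(M_t(F))_{t≥0}` tends to `0`
`P`-almost surely as `t → ∞`. -/
theorem density_martingale_tendsto_zero_on_Ainf_infinite
    {m0 : MeasurableSpace Ω} (ℱ : Filtration ℝ≥0 m0) (P : Measure Ω)
    [IsProbabilityMeasure P]
    (hnat : NaturalConditions ℱ P)
    (hgen : (⨆ t : ℝ≥0, (ℱ t : MeasurableSpace Ω)) = m0)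
    (X N A : ℝ≥0 → Ω → ℝ) (hX : ClassSigma ℱ P X N A)
    (Q : Measure Ω) (hQ : AssociatedMeasure ℱ P Q X)
    (F : Ω → ℝ) (hF_nonneg : ∀ ω, 0 ≤ F ω) (hF_int : Integrable F Q)
    (M : ℝ≥0 → Ω → ℝ) (hM : DensityMartingale ℱ P Q F M) :
    ∀ᵐ ω ∂P, Tendsto (fun t => A t ω) atTop atTop →
      Tendsto (fun t => M t ω) atTop (nhds 0) :=
  density_martingale_tendsto_zero_on_Ainf_infinite_general ℱ P X N A hX Q hQ F hF_nonneg hF_int M hM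
end
end

section
/- Let X be of class (Σ), let Q be the measure associated with X, assume A_∞ = ∞ P-almost surely and assume the exponential identity. Then Q-almost everywhere, X_t → ∞ as t → ∞. -/
open MeasureTheory Filter Set
open scoped NNReal ENNReal Topology

noncomputable section

variable {Ω : Type*}

/-!
Put `F = e^{-A_∞}`. By the exponential identity the measure `F • Q` agrees on `ℱ_t` with
`e^{-A_t} (1 + X_t) • P`, so the `F • Q`-mass of the event that `X` drops below `k` after time `n`
is at most `(1 + k) E_P[e^{-A_n}]`, which tends to `0` because `A_∞ = ∞` `P`-a.s. Hence
`X_t → ∞` `F • Q`-a.e., and it remains to see that `F > 0`, i.e. `A_∞ < ∞`, `Q`-a.e.: on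
`{g ≤ t}` the path leaves `0` for good after `t`, and `dA` only charges the zeros of `X`.

Path events are reached from `ℱ_q`-measurable ones along a countable dense set of times
(right-continuity of `X`), and the bounds add up by cutting each union at the first time at
which the event occurs.
-/

section FirstOccurrence

variable {ι : Type*} [LinearOrder ι]

def firstOccurrence (E : ι → Set Ω) (S : Finset ι) (q : ι) : Set Ω :=
  E q \ ⋃ r ∈ S, ⋃ (_ : r < q), E r

theorem biUnion_firstOccurrence (E : ι → Set Ω) (S : Finset ι) :
    ⋃ q ∈ S, firstOccurrence E S q = ⋃ q ∈ S, E q := by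
  refine (iUnion₂_mono fun q _ => sdiff_subset).antisymm fun ω hω => ?_
  classical
  have hne : (S.filter fun q => ω ∈ E q).Nonempty := by
    obtain ⟨q, hq, hωq⟩ := mem_iUnion₂.1 hω
    exact ⟨q, Finset.mem_filter.2 ⟨hq, hωq⟩⟩
  obtain ⟨hmem, hω₀⟩ := Finset.mem_filter.1 (Finset.min'_mem _ hne)
  refine mem_iUnion₂.2 ⟨_, hmem, hω₀, ?_⟩
  simp only [mem_iUnion, not_exists]
  exact fun r hr hlt hωr => (Finset.min'_le _ r (Finset.mem_filter.2 ⟨hr, hωr⟩)).not_gt hlt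

theorem pairwiseDisjoint_firstOccurrence (E : ι → Set Ω) (S : Finset ι) :
    (S : Set ι).PairwiseDisjoint (firstOccurrence E S) := by
  have key : ∀ q, ∀ r ∈ S, r < q → Disjoint (firstOccurrence E S q) (firstOccurrence E S r) :=
    fun _ _ hr hrq => disjoint_left.2 fun _ hq hr' =>
      hq.2 (mem_biUnion hr (mem_iUnion.2 ⟨hrq, hr'.1⟩))
  intro q hq r hr hne
  rcases hne.lt_or_gt with h | h
  · exact (key r q hq h).symm
  · exact key q r hr h

variable {m0 : MeasurableSpace Ω} {ℱ : Filtration ι m0} {E : ι → Set Ω}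

theorem measurableSet_firstOccurrence (hE : ∀ q, MeasurableSet[ℱ q] (E q)) (S : Finset ι)
    (q : ι) : MeasurableSet[ℱ q] (firstOccurrence E S q) :=
  (hE q).diff <| .biUnion S.countable_toSet fun r _ =>
    .iUnion fun hrq => ℱ.mono hrq.le _ (hE r)

theorem measure_biUnion_finset_le_lintegral (hE : ∀ q, MeasurableSet[ℱ q] (E q))
    {ν P : Measure Ω} {Z : Ω → ℝ≥0∞} (S : Finset ι)
    (h : ∀ q ∈ S, ∀ Λ, MeasurableSet[ℱ q] Λ → Λ ⊆ E q → ν Λ ≤ ∫⁻ ω in Λ, Z ω ∂P) :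
    ν (⋃ q ∈ S, E q) ≤ ∫⁻ ω, Z ω ∂P := by
  have hmeas : ∀ q ∈ S, MeasurableSet (firstOccurrence E S q) :=
    fun q _ => ℱ.le q _ (measurableSet_firstOccurrence hE S q)
  calc ν (⋃ q ∈ S, E q) = ν (⋃ q ∈ S, firstOccurrence E S q) := by
        rw [biUnion_firstOccurrence]
    _ ≤ ∑ q ∈ S, ν (firstOccurrence E S q) := measure_biUnion_finset_le _ _
    _ ≤ ∑ q ∈ S, ∫⁻ ω in firstOccurrence E S q, Z ω ∂P := Finset.sum_le_sum fun q hq =>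
        h q hq _ (measurableSet_firstOccurrence hE S q) sdiff_subset
    _ = ∫⁻ ω in ⋃ q ∈ S, firstOccurrence E S q, Z ω ∂P :=
        (lintegral_biUnion_finset (pairwiseDisjoint_firstOccurrence E S) hmeas Z).symm
    _ ≤ ∫⁻ ω, Z ω ∂P := setLIntegral_le_lintegral _ _

theorem measure_biUnion_le_lintegral (hE : ∀ q, MeasurableSet[ℱ q] (E q))
    {ν P : Measure Ω} {Z : Ω → ℝ≥0∞} {D : Set ι} (hD : D.Countable)
    (h : ∀ q ∈ D, ∀ Λ, MeasurableSet[ℱ q] Λ → Λ ⊆ E q → ν Λ ≤ ∫⁻ ω in Λ, Z ω ∂P) :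
    ν (⋃ q ∈ D, E q) ≤ ∫⁻ ω, Z ω ∂P := by
  classical
  have := hD.to_subtype
  have hmono : Monotone fun S : Finset D => ⋃ q ∈ S, E q :=
    fun _ _ hST => biUnion_subset_biUnion_left hST
  rw [biUnion_eq_iUnion, iUnion_eq_iUnion_finset, hmono.directed_le.measure_iUnion]
  refine iSup_le fun S => ?_
  rw [← Finset.set_biUnion_finset_image]
  exact measure_biUnion_finset_le_lintegral hE _ fun q hq =>
    h q (by obtain ⟨p, -, rfl⟩ := Finset.mem_image.1 hq; exact p.2)

end FirstOccurrence

section RightContinuous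

variable {α β : Type*} [TopologicalSpace α] [LinearOrder α] [OrderTopology α] [DenselyOrdered α]
  [TopologicalSpace β] [LinearOrder β] [OrderClosedTopology β] {f : α → β} {D : Set α}

theorem exists_mem_dense_lt_of_tendsto_nhdsGE (hD : Dense D) {t b : α}
    (hf : Tendsto f (𝓝[≥] t) (𝓝 (f t))) {ε : β} (hft : f t < ε) (htb : t < b) :
    ∃ q ∈ D, t < q ∧ q < b ∧ f q < ε := by
  obtain ⟨u, hu, hsub⟩ := (mem_nhdsGE_iff_exists_Ico_subset' htb).1 (hf (Iio_mem_nhds hft))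
  obtain ⟨q, hqD, htq, hq⟩ := hD.exists_between (lt_min htb hu)
  exact ⟨q, hqD, htq, hq.trans_le (min_le_left _ _), hsub ⟨htq.le, hq.trans_le (min_le_right _ _)⟩⟩

theorem le_of_forall_mem_dense_le (hD : Dense D) (hf : ∀ t, Tendsto f (𝓝[≥] t) (𝓝 (f t)))
    {t u : α} {ε : β} (h : ∀ q ∈ insert u (D ∩ Icc t u), ε ≤ f q) {v : α} (hv : v ∈ Icc t u) :
    ε ≤ f v := by
  by_contra! hlt
  rcases hv.2.eq_or_lt with rfl | hvu
  · exact hlt.not_ge (h v (mem_insert v _))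
  · obtain ⟨q, hqD, hvq, hqu, hq⟩ := exists_mem_dense_lt_of_tendsto_nhdsGE hD (hf v) hlt hvu
    exact hq.not_ge (h q (mem_insert_of_mem _ ⟨hqD, hv.1.trans hvq.le, hqu.le⟩))

end RightContinuous

theorem NNReal.tendsto_atTop_of_forall_mem_dense {f : ℝ≥0 → ℝ} {D : Set ℝ≥0} (hD : Dense D)
    (hf : ∀ t, Tendsto f (𝓝[≥] t) (𝓝 (f t)))
    (h : ∀ k : ℕ, ∃ n : ℕ, ∀ q ∈ D, (n : ℝ≥0) ≤ q → (k : ℝ) ≤ f q) :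
    Tendsto f atTop atTop := by
  refine tendsto_atTop.2 fun b => ?_
  obtain ⟨n, hn⟩ := h ⌈b⌉₊
  filter_upwards [eventually_ge_atTop (n : ℝ≥0)] with s hs
  by_contra! hlt
  obtain ⟨q, hqD, hsq, -, hq⟩ := exists_mem_dense_lt_of_tendsto_nhdsGE hD (hf s)
    (hlt.trans_le (Nat.le_ceil b)) (lt_add_one s)
  exact hq.not_ge (hn q hqD (hs.trans hsq.le))

theorem setLIntegral_ofReal_eq_of_setIntegral_eq {m0 : MeasurableSpace Ω} {μ ν : Measure Ω}
    {f g : Ω → ℝ} {s : Set Ω} (hf : ∀ ω, 0 ≤ f ω) (hg : ∀ ω, 0 < g ω) (hgi : Integrable g ν)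
    (hμν : ν s = 0 → μ s = 0) (h : ∫ ω in s, f ω ∂μ = ∫ ω in s, g ω ∂ν) :
    ∫⁻ ω in s, ENNReal.ofReal (f ω) ∂μ = ∫⁻ ω in s, ENNReal.ofReal (g ω) ∂ν := by
  by_cases hfi : IntegrableOn f s μ
  · rw [← ofReal_integral_eq_lintegral_ofReal hfi (ae_of_all _ hf), h,
      ofReal_integral_eq_lintegral_ofReal hgi.integrableOn (ae_of_all _ fun ω => (hg ω).le)]
  · -- `∫ f = 0` by convention, which forces `ν s = 0`, hence `μ s = 0` and `f` is integrable.
    rw [integral_undef hfi, eq_comm,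
      integral_eq_zero_iff_of_nonneg (fun ω => (hg ω).le) hgi.integrableOn] at h
    have hνs : ν s = 0 := by
      simpa [(hg _).ne'] using ae_iff.1 h
    exact absurd (IntegrableOn.of_measure_zero (hμν hνs)) hfi

variable {m0 : MeasurableSpace Ω} {ℱ : Filtration ℝ≥0 m0} {P Q : Measure Ω}
  {X N A : ℝ≥0 → Ω → ℝ}

namespace ClassSigma

theorem adapted_X (hX : ClassSigma ℱ P X N A) : Adapted ℱ X :=
  hX.subm.stronglyAdapted.adapted

theorem measurable_X (hX : ClassSigma ℱ P X N A) (t : ℝ≥0) : Measurable (X t) :=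
  (hX.adapted_X t).mono (ℱ.le t) le_rfl

theorem measurable_A (hX : ClassSigma ℱ P X N A) (t : ℝ≥0) : Measurable (A t) :=
  (hX.adaptedA t).mono (ℱ.le t) le_rfl

theorem A_nonneg (hX : ClassSigma ℱ P X N A) (t : ℝ≥0) (ω : Ω) : 0 ≤ A t ω :=
  hX.zeroA ω ▸ hX.monoA ω bot_le

theorem exp_neg_A_le_one (hX : ClassSigma ℱ P X N A) (t : ℝ≥0) (ω : Ω) :
    Real.exp (-(A t ω)) ≤ 1 :=
  Real.exp_le_one_iff.2 (neg_nonpos.2 (hX.A_nonneg t ω))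

theorem integrable_exp_neg_A_mul [IsFiniteMeasure P] (hX : ClassSigma ℱ P X N A) (t : ℝ≥0) :
    Integrable (fun ω => Real.exp (-(A t ω)) * (1 + X t ω)) P := by
  have hmeas : Measurable fun ω => Real.exp (-(A t ω)) * (1 + X t ω) :=
    (hX.measurable_A t).neg.exp.mul (measurable_const.add (hX.measurable_X t))
  refine ((integrable_const 1).add (hX.subm.integrable t)).mono' hmeas.aestronglyMeasurable
    (ae_of_all _ fun ω => ?_)
  have h1X : 0 ≤ 1 + X t ω := by linarith [hX.nonneg t ω]
  rw [Real.norm_of_nonneg (mul_nonneg (Real.exp_pos _).le h1X)]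
  exact mul_le_of_le_one_left h1X (hX.exp_neg_A_le_one t ω)

theorem measurable_iInf_exp_neg_A (hX : ClassSigma ℱ P X N A) :
    Measurable fun ω => ⨅ s, Real.exp (-(A s ω)) := by
  have hnat : ∀ ω, ⨅ n : ℕ, Real.exp (-(A n ω)) = ⨅ s, Real.exp (-(A s ω)) := fun ω =>
    Antitone.ciInf_comp_tendsto_atTop_of_linearOrder
      (fun _ _ hst => Real.exp_le_exp.2 (neg_le_neg (hX.monoA ω hst)))
      tendsto_natCast_atTop_atTop
  simp_rw [← hnat]
  exact .iInf fun n => (hX.measurable_A n).neg.exp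

end ClassSigma

namespace AssociatedMeasure

theorem measure_inter_lastZero_le_s7 (hQ : AssociatedMeasure ℱ P Q X)
    (hX : ClassSigma ℱ P X N A) {t : ℝ≥0} {Λ : Set Ω} (hΛ : MeasurableSet[ℱ t] Λ) :
    Q (Λ ∩ {ω | lastZero X ω ≤ t}) = ∫⁻ ω in Λ, ENNReal.ofReal (X t ω) ∂P := by
  rw [hQ.2.2 t Λ hΛ, ofReal_integral_eq_lintegral_ofReal (hX.subm.integrable t).integrableOn
    (ae_of_all _ (hX.nonneg t))]

theorem measure_eq_zero_of_forall_nat (hQ : AssociatedMeasure ℱ P Q X) {E : Set Ω}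
    (h : ∀ n : ℕ, Q (E ∩ {ω | lastZero X ω ≤ (n : ℝ≥0)}) = 0) : Q E = 0 := by
  refine measure_mono_null (fun ω hω => ?_) (measure_union_null hQ.2.1 (measure_iUnion_null h))
  by_cases hg : lastZero X ω = ∞
  · exact Or.inl hg
  · obtain ⟨n, hn⟩ := ENNReal.exists_nat_gt hg
    exact Or.inr (mem_iUnion.2 ⟨n, hω, by simpa using hn.le⟩)

theorem measure_eq_zero_of_measure_eq_zero (hQ : AssociatedMeasure ℱ P Q X)
    {t : ℝ≥0} {Λ : Set Ω} (hΛ : MeasurableSet[ℱ t] Λ) (hPΛ : P Λ = 0) : Q Λ = 0 :=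
  hQ.measure_eq_zero_of_forall_nat fun n => by
    have hle : Λ ∩ {ω | lastZero X ω ≤ (n : ℝ≥0)} ⊆ Λ ∩ {ω | lastZero X ω ≤ max t n} :=
      inter_subset_inter_right _ fun ω hω => le_trans hω (ENNReal.coe_le_coe.2 (le_max_right _ _))
    refine measure_mono_null hle ?_
    rw [hQ.2.2 _ Λ (ℱ.mono (le_max_left t n) _ hΛ), Measure.restrict_eq_zero.2 hPΛ,
      integral_zero_measure, ENNReal.ofReal_zero]

/-- On `{g ≤ t}`, `X` stays away from `0` on `[t, u]` outside a set of arbitrarily small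
`Q`-measure, and where it does, `dA` carries no mass on `[t, u]` up to a `P`-null, hence `Q`-null,
`ℱ u`-measurable set. -/
theorem measure_lastZero_le_inter_A_lt_eq_zero [IsProbabilityMeasure P]
    (hQ : AssociatedMeasure ℱ P Q X) (hX : ClassSigma ℱ P X N A) {t u : ℝ≥0} (htu : t ≤ u) :
    Q ({ω | lastZero X ω ≤ t} ∩ {ω | A t ω < A u ω}) = 0 := by
  obtain ⟨D, hDc, hD⟩ := TopologicalSpace.exists_countable_dense ℝ≥0
  have hD'c : (insert u (D ∩ Icc t u)).Countable := (hDc.mono inter_subset_left).insert u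
  have hD'le : ∀ q ∈ insert u (D ∩ Icc t u), t ≤ q ∧ q ≤ u := by
    rintro q (rfl | ⟨-, hq⟩)
    exacts [⟨htu, le_rfl⟩, hq]
  have hE : ∀ (ε : ℝ) q, MeasurableSet[ℱ q] {ω | X q ω < ε} :=
    fun ε q => measurableSet_lt (hX.adapted_X q) measurable_const
  refine nonpos_iff_eq_zero.1 (ENNReal.le_of_forall_pos_le_add fun ε _ _ => ?_)
  set W := ⋃ q ∈ insert u (D ∩ Icc t u), {ω | X q ω < ε}
  have hW : MeasurableSet[ℱ u] W := .biUnion hD'c fun q hq => ℱ.mono (hD'le q hq).2 _ (hE ε q)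
  have hsmall : Q (W ∩ {ω | lastZero X ω ≤ t}) ≤ ε := by
    rw [← Measure.restrict_apply (ℱ.le u _ hW)]
    calc Q.restrict {ω | lastZero X ω ≤ t} W ≤ ∫⁻ _, (ε : ℝ≥0∞) ∂P := by
          refine measure_biUnion_le_lintegral (hE ε) hD'c fun q hq Λ hΛ hΛW => ?_
          rw [Measure.restrict_apply (ℱ.le q _ hΛ)]
          calc Q (Λ ∩ {ω | lastZero X ω ≤ t}) ≤ Q (Λ ∩ {ω | lastZero X ω ≤ q}) :=
                measure_mono (inter_subset_inter_right _ fun ω hω =>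
                  le_trans hω (ENNReal.coe_le_coe.2 (hD'le q hq).1))
            _ = ∫⁻ ω in Λ, ENNReal.ofReal (X q ω) ∂P := hQ.measure_inter_lastZero_le_s7 hX hΛ
            _ ≤ ∫⁻ _ in Λ, (ε : ℝ≥0∞) ∂P := setLIntegral_mono measurable_const fun ω hω => by
                simpa using ENNReal.ofReal_le_ofReal (hΛW hω).le
      _ = ε := by simp
  have hnull : Q ({ω | A t ω < A u ω} \ W) = 0 := by
    refine hQ.measure_eq_zero_of_measure_eq_zero
      ((measurableSet_lt ((hX.adaptedA t).mono (ℱ.mono htu) le_rfl) (hX.adaptedA u)).diff hW)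
      (measure_mono_null ?_ (ae_iff.1 hX.carriedA))
    rintro ω ⟨hlt, hωW⟩ hcarried
    have hX_ne : ∀ v ∈ Icc t u, X v ω ≠ 0 := fun v hv =>
      (lt_of_lt_of_le (NNReal.coe_pos.2 ‹0 < ε›) (le_of_forall_mem_dense_le hD (hX.cadlagX ω).1
        (fun q hq => not_lt.1 fun h => hωW (mem_biUnion hq h)) hv)).ne'
    exact hlt.ne' (hcarried t u htu hX_ne)
  calc Q ({ω | lastZero X ω ≤ t} ∩ {ω | A t ω < A u ω})
      ≤ Q (({ω | A t ω < A u ω} \ W) ∪ (W ∩ {ω | lastZero X ω ≤ t})) := by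
        refine measure_mono fun ω ⟨hg, hA⟩ => ?_
        by_cases hω : ω ∈ W
        exacts [Or.inr ⟨hω, hg⟩, Or.inl ⟨hA, hω⟩]
    _ ≤ 0 + ε := (measure_union_le _ _).trans (by rw [hnull]; gcongr)

theorem ae_bddAbove_A [IsProbabilityMeasure P] (hQ : AssociatedMeasure ℱ P Q X)
    (hX : ClassSigma ℱ P X N A) : ∀ᵐ ω ∂Q, BddAbove (range fun s => A s ω) := by
  refine hQ.measure_eq_zero_of_forall_nat fun n => measure_mono_null ?_ (measure_iUnion_null
    fun m : ℕ => hQ.measure_lastZero_le_inter_A_lt_eq_zero hX (t := n) (u := n + m) le_self_add)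
  rintro ω ⟨hω, hg⟩
  by_contra hA
  simp only [mem_iUnion, mem_inter_iff, mem_ofPred_eq, not_exists, not_and, not_lt] at hA
  refine hω ⟨A n ω, forall_mem_range.2 fun s => ?_⟩
  exact (hX.monoA ω ((Nat.le_ceil s).trans le_add_self)).trans (hA ⌈s⌉₊ hg)

end AssociatedMeasure

namespace ExpIdentity

theorem withDensity_apply_eq [IsFiniteMeasure P] (hexp : ExpIdentity ℱ P Q X A)
    (hX : ClassSigma ℱ P X N A) (hQ : AssociatedMeasure ℱ P Q X) {t : ℝ≥0} {Λ : Set Ω}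
    (hΛ : MeasurableSet[ℱ t] Λ) :
    Q.withDensity (fun ω => ENNReal.ofReal (⨅ s, Real.exp (-(A s ω)))) Λ =
      ∫⁻ ω in Λ, ENNReal.ofReal (Real.exp (-(A t ω)) * (1 + X t ω)) ∂P := by
  rw [withDensity_apply _ (ℱ.le t _ hΛ)]
  exact setLIntegral_ofReal_eq_of_setIntegral_eq (fun ω => le_ciInf fun s => (Real.exp_pos _).le)
    (fun ω => mul_pos (Real.exp_pos _) (by linarith [hX.nonneg t ω]))
    (hX.integrable_exp_neg_A_mul t) (hQ.measure_eq_zero_of_measure_eq_zero hΛ) (hexp t Λ hΛ)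

theorem ae_withDensity_exists_forall_le [IsProbabilityMeasure P] (hexp : ExpIdentity ℱ P Q X A)
    (hX : ClassSigma ℱ P X N A) (hQ : AssociatedMeasure ℱ P Q X)
    (hAinf : ∀ᵐ ω ∂P, Tendsto (fun t => A t ω) atTop atTop) {D : Set ℝ≥0} (hD : D.Countable)
    (k : ℕ) :
    ∀ᵐ ω ∂Q.withDensity (fun ω => ENNReal.ofReal (⨅ s, Real.exp (-(A s ω)))),
      ∃ n : ℕ, ∀ q ∈ D, (n : ℝ≥0) ≤ q → (k : ℝ) ≤ X q ω := by
  set bound : ℕ → Ω → ℝ≥0∞ := fun n ω => ENNReal.ofReal ((1 + k) * Real.exp (-(A n ω)))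
  have hmass : ∀ n : ℕ, Q.withDensity (fun ω => ENNReal.ofReal (⨅ s, Real.exp (-(A s ω))))
      (⋃ q ∈ D ∩ Ici (n : ℝ≥0), {ω | X q ω < k}) ≤ ∫⁻ ω, bound n ω ∂P := fun n =>
    measure_biUnion_le_lintegral (fun q => measurableSet_lt (hX.adapted_X q) measurable_const)
      (hD.mono inter_subset_left) fun q hq Λ hΛ hΛk => by
        rw [hexp.withDensity_apply_eq hX hQ hΛ]
        refine setLIntegral_mono ((hX.measurable_A n).neg.exp.const_mul _).ennreal_ofReal
          fun ω hω => ENNReal.ofReal_le_ofReal ?_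
        exact (mul_le_mul (Real.exp_le_exp.2 (neg_le_neg (hX.monoA ω hq.2)))
          (by linarith [show X q ω < k from hΛk hω]) (by linarith [hX.nonneg q ω])
          (Real.exp_pos _).le).trans_eq (mul_comm _ _)
  have hlim : Tendsto (fun n : ℕ => ∫⁻ ω, bound n ω ∂P) atTop (𝓝 0) := by
    have := tendsto_lintegral_of_dominated_convergence (fun _ => ENNReal.ofReal (1 + k))
      (fun n => ((hX.measurable_A n).neg.exp.const_mul _).ennreal_ofReal)
      (fun n => ae_of_all _ fun ω => ENNReal.ofReal_le_ofReal
        (mul_le_of_le_one_right (by positivity) (hX.exp_neg_A_le_one n ω)))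
      (by simp) (hAinf.mono fun ω hω => ENNReal.tendsto_ofReal
        ((Real.tendsto_exp_neg_atTop_nhds_zero.comp
          (hω.comp tendsto_natCast_atTop_atTop)).const_mul (1 + (k : ℝ))))
    simpa using this
  rw [ae_iff]
  refine nonpos_iff_eq_zero.1 (ge_of_tendsto' hlim fun n => (measure_mono ?_).trans (hmass n))
  intro ω hω
  simp only [mem_ofPred_eq, not_exists, not_forall, not_le] at hω
  obtain ⟨q, hqD, hnq, hq⟩ := hω n
  exact mem_biUnion ⟨hqD, hnq⟩ hq

end ExpIdentity

theorem X_tendsto_atTop_Q_ae_general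
    {m0 : MeasurableSpace Ω} (ℱ : Filtration ℝ≥0 m0) (P : Measure Ω)
    [IsProbabilityMeasure P]
    (X N A : ℝ≥0 → Ω → ℝ) (hX : ClassSigma ℱ P X N A)
    (Q : Measure Ω) (hQ : AssociatedMeasure ℱ P Q X)
    (hAinf : ∀ᵐ ω ∂P, Tendsto (fun t => A t ω) atTop atTop)
    (hexp : ExpIdentity ℱ P Q X A) :
    ∀ᵐ ω ∂Q, Tendsto (fun t => X t ω) atTop atTop := by
  obtain ⟨D, hDc, hD⟩ := TopologicalSpace.exists_countable_dense ℝ≥0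
  have hdensity_pos : ∀ᵐ ω ∂Q, ENNReal.ofReal (⨅ s, Real.exp (-(A s ω))) ≠ 0 :=
    (hQ.ae_bddAbove_A hX).mono fun ω ⟨M, hM⟩ => (ENNReal.ofReal_pos.2 ((Real.exp_pos (-M)).trans_le
      (le_ciInf fun s => Real.exp_le_exp.2 (neg_le_neg (hM (mem_range_self s)))))).ne'
  have hQ_ac : Q ≪ Q.withDensity (fun ω => ENNReal.ofReal (⨅ s, Real.exp (-(A s ω)))) :=
    withDensity_absolutelyContinuous' hX.measurable_iInf_exp_neg_A.ennreal_ofReal.aemeasurable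
      hdensity_pos
  have hlarge : ∀ᵐ ω ∂Q, ∀ k : ℕ, ∃ n : ℕ, ∀ q ∈ D, (n : ℝ≥0) ≤ q → (k : ℝ) ≤ X q ω :=
    hQ_ac.ae_le (ae_all_iff.2 (hexp.ae_withDensity_exists_forall_le hX hQ hAinf hDc))
  exact hlarge.mono fun ω hω => NNReal.tendsto_atTop_of_forall_mem_dense hD (hX.cadlagX ω).1 hω

/-- If `A_∞ = ∞` `P`-a.s. then, under the exponential identity, `X_t → ∞`
`Q`-almost everywhere. -/
theorem X_tendsto_atTop_Q_ae
    {m0 : MeasurableSpace Ω} (ℱ : Filtration ℝ≥0 m0) (P : Measure Ω)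
    [IsProbabilityMeasure P]
    (hnat : NaturalConditions ℱ P)
    (hgen : (⨆ t : ℝ≥0, (ℱ t : MeasurableSpace Ω)) = m0)
    (X N A : ℝ≥0 → Ω → ℝ) (hX : ClassSigma ℱ P X N A)
    (Q : Measure Ω) (hQ : AssociatedMeasure ℱ P Q X)
    (hAinf : ∀ᵐ ω ∂P, Tendsto (fun t => A t ω) atTop atTop)
    (hexp : ExpIdentity ℱ P Q X A) :
    ∀ᵐ ω ∂Q, Tendsto (fun t => X t ω) atTop atTop :=
  X_tendsto_atTop_Q_ae_general ℱ P X N A hX Q hQ hAinf hexp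
end
end

section
/- Let X be of class (Σ), let Q be the measure associated with X, assume A_∞ = ∞ P-almost surely and assume the exponential identity (so that X_t → ∞ Q-almost everywhere). Let (F_t)_{t≥0} be a process of class (C) such that F_g is Q-integrable. Then E_P[F_t X_t] → Q[F_∞] as t → ∞. -/
open MeasureTheory Filter Set
open scoped NNReal ENNReal Topology

noncomputable section

variable {Ω : Type*}

/-- A process `(F_t)` of class (C) with limit `F_∞`: nonnegative, uniformly bounded,
nonincreasing, càdlàg, adapted, eventually frozen at time `g^{[a]}` for some `a > 0`,
with `Q`-integrable limit `F_∞`. -/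
structure ClassC {m0 : MeasurableSpace Ω} (ℱ : Filtration ℝ≥0 m0) (Q : Measure Ω)
    (X : ℝ≥0 → Ω → ℝ) (F : ℝ≥0 → Ω → ℝ) (Finf : Ω → ℝ) : Prop where
  nonneg : ∀ t ω, 0 ≤ F t ω
  bdd : ∃ C : ℝ, ∀ t ω, F t ω ≤ C
  anti : ∀ ω, Antitone fun t => F t ω
  cadlag : ∀ ω, Cadlag fun t => F t ω
  adapted : Adapted ℱ F
  frozen : ∃ a : ℝ, 0 < a ∧ ∀ ω, ∀ t : ℝ≥0,
    lastBelow a X ω ≤ (t : ℝ≥0∞) → F t ω = F (lastBelow a X ω).toNNReal ω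
  tendsto : ∀ ω, Tendsto (fun t => F t ω) atTop (nhds (Finf ω))
  integrable : Integrable Finf Q

/-- The value `F_g` of the process `F` at the last zero `g` of `X` (equal to `F_∞`
on `{g = ∞}`). -/
def valueAtLastZero (X : ℝ≥0 → Ω → ℝ) (F : ℝ≥0 → Ω → ℝ) (Finf : Ω → ℝ) (ω : Ω) : ℝ :=
  if lastZero X ω = ∞ then Finf ω else F (lastZero X ω).toNNReal ω

/-! Through the defining identity of `Q`, `E_P[F_t X_t] = Q[F_t ; g ≤ t]`. Since `F` is
nonincreasing, `0 ≤ F_t ≤ F_g` on `{g ≤ t}`, and `g < ∞` `Q`-a.e., so `1_{g ≤ t} F_t → F_∞`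
`Q`-a.e. under the integrable bound `F_g`: dominated convergence concludes. -/

section DominatedConvergence

variable {α ι : Type*} {m0 : MeasurableSpace α} {μ : Measure α} {l : Filter ι}
  [l.IsCountablyGenerated]

theorem tendsto_setIntegral_of_dominated_of_eventually_mem {S : ι → Set α} {F : ι → α → ℝ}
    {f G : α → ℝ} (hS : ∀ i, μ (S i) ≠ ∞) (hF : ∀ i, StronglyMeasurable (F i))
    (hG : Integrable G μ) (hbound : ∀ i, ∀ x ∈ S i, ‖F i x‖ ≤ G x)
    (hmem : ∀ᵐ x ∂μ, ∀ᶠ i in l, x ∈ S i)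
    (hlim : ∀ᵐ x ∂μ, Tendsto (fun i => F i x) l (𝓝 (f x))) :
    Tendsto (fun i => ∫ x in S i, F i x ∂μ) l (𝓝 (∫ x, f x ∂μ)) := by
  -- `S i` need not be measurable; its measurable hull has the same restriction of `μ`.
  set T := fun i => toMeasurable μ (S i)
  have hT : ∀ i, MeasurableSet (T i) := fun i => measurableSet_toMeasurable μ (S i)
  have hbound_T : ∀ i, ∀ᵐ x ∂μ, ‖(T i).indicator (F i) x‖ ≤ ‖G x‖ := by
    intro i
    have hle : ∀ᵐ x ∂μ.restrict (T i), ‖F i x‖ ≤ G x := by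
      rw [Measure.restrict_toMeasurable (hS i),
        ae_restrict_iff₀ (nullMeasurableSet_le (hF i).measurable.norm.aemeasurable
          hG.aemeasurable.restrict)]
      exact ae_of_all _ (hbound i)
    filter_upwards [(ae_restrict_iff' (hT i)).1 hle] with x hx
    by_cases hxT : x ∈ T i
    · rw [indicator_of_mem hxT]
      exact (hx hxT).trans (le_abs_self _)
    · rw [indicator_of_notMem hxT, norm_zero]
      exact norm_nonneg _
  have hlim_T : ∀ᵐ x ∂μ, Tendsto (fun i => (T i).indicator (F i) x) l (𝓝 (f x)) := by
    filter_upwards [hmem, hlim] with x hx_mem hx_lim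
    refine hx_lim.congr' (hx_mem.mono fun i hi => ?_)
    exact (indicator_of_mem (subset_toMeasurable μ (S i) hi) _).symm
  have h := tendsto_integral_filter_of_dominated_convergence _
    (Eventually.of_forall fun i => ((hF i).indicator (hT i)).aestronglyMeasurable)
    (Eventually.of_forall hbound_T) hG.norm hlim_T
  refine h.congr fun i => ?_
  rw [integral_indicator (hT i), Measure.restrict_toMeasurable (hS i)]

end DominatedConvergence

theorem integral_congr_of_trim_eq {m m0 : MeasurableSpace Ω} (hm : m ≤ m0)
    {μ ν : Measure Ω} (h : μ.trim hm = ν.trim hm) {f : Ω → ℝ} (hf : StronglyMeasurable[m] f) :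
    ∫ ω, f ω ∂μ = ∫ ω, f ω ∂ν := by
  rw [integral_trim hm hf, h, ← integral_trim hm hf]

namespace AssociatedMeasure

variable {m0 : MeasurableSpace Ω} {ℱ : Filtration ℝ≥0 m0} {P Q : Measure Ω}
  {X : ℝ≥0 → Ω → ℝ}

theorem measure_lastZero_le_ne_top (hQ : AssociatedMeasure ℱ P Q X) (t : ℝ≥0) :
    Q {ω | lastZero X ω ≤ t} ≠ ∞ := by
  simpa using (hQ.2.2 t univ MeasurableSet.univ).trans_ne ENNReal.ofReal_ne_top

theorem trim_restrict_eq (hQ : AssociatedMeasure ℱ P Q X) {t : ℝ≥0}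
    (hXi : Integrable (X t) P) (hXnn : ∀ ω, 0 ≤ X t ω) :
    (Q.restrict {ω | lastZero X ω ≤ t}).trim (ℱ.le t)
      = (P.withDensity fun ω => ENNReal.ofReal (X t ω)).trim (ℱ.le t) := by
  refine @Measure.ext Ω (ℱ t) _ _ fun Λ hΛ => ?_
  have hΛ0 : MeasurableSet Λ := ℱ.le t _ hΛ
  rw [trim_measurableSet_eq _ hΛ, trim_measurableSet_eq _ hΛ, Measure.restrict_apply hΛ0,
    hQ.2.2 t Λ hΛ, withDensity_apply _ hΛ0,
    ofReal_integral_eq_lintegral_ofReal hXi.restrict (ae_of_all _ hXnn)]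

theorem setIntegral_lastZero_le_eq_integral_mul (hQ : AssociatedMeasure ℱ P Q X) {t : ℝ≥0}
    (hXm : Measurable (X t)) (hXi : Integrable (X t) P) (hXnn : ∀ ω, 0 ≤ X t ω)
    {f : Ω → ℝ} (hf : Measurable[ℱ t] f) :
    ∫ ω in {ω | lastZero X ω ≤ t}, f ω ∂Q = ∫ ω, f ω * X t ω ∂P := by
  rw [integral_congr_of_trim_eq (ℱ.le t) (hQ.trim_restrict_eq hXi hXnn) hf.stronglyMeasurable,
    integral_withDensity_eq_integral_toReal_smul hXm.ennreal_ofReal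
      (ae_of_all _ fun _ => ENNReal.ofReal_lt_top)]
  simp only [ENNReal.toReal_ofReal (hXnn _), smul_eq_mul, mul_comm]

end AssociatedMeasure

theorem le_valueAtLastZero {X : ℝ≥0 → Ω → ℝ} {F : ℝ≥0 → Ω → ℝ} {Finf : Ω → ℝ} {ω : Ω}
    (hF : Antitone fun t => F t ω) {t : ℝ≥0} (ht : lastZero X ω ≤ t) :
    F t ω ≤ valueAtLastZero X F Finf ω := by
  have hg : lastZero X ω ≠ ∞ := ne_top_of_le_ne_top ENNReal.coe_ne_top ht
  rw [valueAtLastZero, if_neg hg]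
  exact hF ((ENNReal.toNNReal_le_toNNReal hg ENNReal.coe_ne_top).2 ht)

theorem eventually_lastZero_le {X : ℝ≥0 → Ω → ℝ} {ω : Ω} (hg : lastZero X ω ≠ ∞) :
    ∀ᶠ t : ℝ≥0 in atTop, lastZero X ω ≤ t :=
  eventually_atTop.2 ⟨(lastZero X ω).toNNReal, fun _ ht =>
    (ENNReal.coe_toNNReal hg).symm.le.trans (ENNReal.coe_le_coe.2 ht)⟩

theorem classC_tendsto_general
    {m0 : MeasurableSpace Ω} (ℱ : Filtration ℝ≥0 m0) (P : Measure Ω)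
    (X N A : ℝ≥0 → Ω → ℝ) (hX : ClassSigma ℱ P X N A)
    (Q : Measure Ω) (hQ : AssociatedMeasure ℱ P Q X)
    (F : ℝ≥0 → Ω → ℝ) (Finf : Ω → ℝ) (hC : ClassC ℱ Q X F Finf)
    (hFg : Integrable (valueAtLastZero X F Finf) Q) :
    Tendsto (fun t : ℝ≥0 => ∫ ω, F t ω * X t ω ∂P) atTop
      (nhds (∫ ω, Finf ω ∂Q)) := by
  have hF : ∀ t, StronglyMeasurable (F t) := fun t =>
    ((hC.adapted t).mono (ℱ.le t) le_rfl).stronglyMeasurable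
  have htransfer : ∀ t : ℝ≥0, ∫ ω in {ω | lastZero X ω ≤ t}, F t ω ∂Q
      = ∫ ω, F t ω * X t ω ∂P := fun t =>
    hQ.setIntegral_lastZero_le_eq_integral_mul ((hX.subm.1 t).mono (ℱ.le t)).measurable
      (hX.subm.integrable t) (hX.nonneg t) (hC.adapted t)
  refine (tendsto_setIntegral_of_dominated_of_eventually_mem hQ.measure_lastZero_le_ne_top hF
    hFg (fun t ω hω => ?_) ?_ (ae_of_all _ hC.tendsto)).congr htransfer
  · rw [Real.norm_of_nonneg (hC.nonneg t ω)]
    exact le_valueAtLastZero (hC.anti ω) hω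
  · filter_upwards [measure_eq_zero_iff_ae_notMem.1 hQ.2.1] with ω hω
    exact eventually_lastZero_le hω

/-- Penalisation asymptotics for class (C) weights: `E_P[F_t X_t] → Q[F_∞]`. -/
theorem classC_tendsto
    {m0 : MeasurableSpace Ω} (ℱ : Filtration ℝ≥0 m0) (P : Measure Ω)
    [IsProbabilityMeasure P]
    (hnat : NaturalConditions ℱ P)
    (hgen : (⨆ t : ℝ≥0, (ℱ t : MeasurableSpace Ω)) = m0)
    (X N A : ℝ≥0 → Ω → ℝ) (hX : ClassSigma ℱ P X N A)
    (Q : Measure Ω) (hQ : AssociatedMeasure ℱ P Q X)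
    (hAinf : ∀ᵐ ω ∂P, Tendsto (fun t => A t ω) atTop atTop)
    (hexp : ExpIdentity ℱ P Q X A)
    (F : ℝ≥0 → Ω → ℝ) (Finf : Ω → ℝ) (hC : ClassC ℱ Q X F Finf)
    (hFg : Integrable (valueAtLastZero X F Finf) Q) :
    Tendsto (fun t : ℝ≥0 => ∫ ω, F t ω * X t ω ∂P) atTop
      (nhds (∫ ω, Finf ω ∂Q)) :=
  classC_tendsto_general ℱ P X N A hX Q hQ F Finf hC hFg
end
end

section
/- Let X be of class (Σ), let Q be the measure associated with X, assume A_∞ = ∞ P-almost surely and assume the exponential identity. Let (F_t)_{t≥0} be a process of class (C) such that F_g is Q-integrable and F_∞ is not Q-almost everywhere equal to zero. Then for all sufficiently large t, 0 < E_P[F_t X_t] < ∞, so that the probability measure Q_t := (F_t X_t / E_P[F_t X_t])·P is well defined; and for every s ≥ 0 and every Λ_s ∈ F_s, Q_t[Λ_s] → Q_∞[Λ_s] as t → ∞, where Q_∞ := (F_∞ / Q[F_∞])·Q and 0 < Q[F_∞] < ∞. -/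
open MeasureTheory Filter Set
open scoped NNReal ENNReal Topology

noncomputable section

variable {Ω : Type*}

/-!
On `ℱ_t`, the measure `X_t · P` is the restriction of `Q` to `{g ≤ t}`, so for `Λ ∈ ℱ_s` and
`t ≥ s` we have `E_P[1_Λ F_t X_t] = Q[1_Λ F_t ; g ≤ t]`. As `g < ∞` `Q`-a.e. and `F_t ≤ F_g` on
`{g ≤ t}`, dominated convergence with the `Q`-integrable bound `F_g` gives the limit
`Q[1_Λ F_∞]`; the case `Λ = Ω` gives the normalisation, which is positive as `F_∞ ≥ 0` is not
`Q`-a.e. zero.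
-/

section Density

variable {m m0 : MeasurableSpace Ω} {P Q : Measure Ω} {S : Set Ω} {Y : Ω → ℝ}

theorem trim_restrict_eq_trim_withDensity (hm : m ≤ m0) (hY_int : Integrable Y P)
    (hY_nonneg : 0 ≤ Y)
    (hQ : ∀ Λ, MeasurableSet[m] Λ → Q (Λ ∩ S) = ENNReal.ofReal (∫ ω in Λ, Y ω ∂P)) :
    (Q.restrict S).trim hm = (P.withDensity fun ω => ENNReal.ofReal (Y ω)).trim hm := by
  refine @Measure.ext _ m _ _ fun Λ hΛ => ?_
  rw [trim_measurableSet_eq hm hΛ, trim_measurableSet_eq hm hΛ,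
    Measure.restrict_apply (hm _ hΛ), hQ Λ hΛ, withDensity_apply _ (hm _ hΛ),
    ofReal_integral_eq_lintegral_ofReal hY_int.integrableOn (ae_of_all _ fun ω => hY_nonneg ω)]

theorem integral_restrict_eq_integral_mul (hm : m ≤ m0) (hY_meas : Measurable Y)
    (hY_int : Integrable Y P) (hY_nonneg : 0 ≤ Y)
    (hQ : ∀ Λ, MeasurableSet[m] Λ → Q (Λ ∩ S) = ENNReal.ofReal (∫ ω in Λ, Y ω ∂P))
    {f : Ω → ℝ} (hf : StronglyMeasurable[m] f) :
    ∫ ω, f ω ∂(Q.restrict S) = ∫ ω, Y ω * f ω ∂P := by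
  rw [integral_trim hm hf, trim_restrict_eq_trim_withDensity hm hY_int hY_nonneg hQ,
    ← integral_trim hm hf]
  change ∫ ω, f ω ∂(P.withDensity fun ω => ((Y ω).toNNReal : ℝ≥0∞)) = _
  rw [integral_withDensity_eq_integral_smul hY_meas.real_toNNReal]
  simp only [NNReal.smul_def, Real.coe_toNNReal _ (hY_nonneg _), smul_eq_mul]

end Density

theorem tendsto_integral_restrict_le_of_dominated {m0 : MeasurableSpace Ω} {Q : Measure Ω}
    [SFinite Q]
    {g : Ω → ℝ≥0∞} (hg : ∀ᵐ ω ∂Q, g ω ≠ ∞) {F : ℝ≥0 → Ω → ℝ} {Finf G : Ω → ℝ}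
    (hF : ∀ t, StronglyMeasurable (F t)) (hG : Integrable G Q)
    (hFG : ∀ (t : ℝ≥0) ω, g ω ≤ t → |F t ω| ≤ G ω)
    (hlim : ∀ᵐ ω ∂Q, Tendsto (F · ω) atTop (𝓝 (Finf ω))) :
    Tendsto (fun t : ℝ≥0 => ∫ ω, F t ω ∂(Q.restrict {ω | g ω ≤ t})) atTop
      (𝓝 (∫ ω, Finf ω ∂Q)) := by
  -- `{g ≤ t}` need not be measurable; its measurable hull carries the same restriction of `Q`.
  set M : ℝ≥0 → Set Ω := fun t => toMeasurable Q {ω | g ω ≤ t}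
  have h_eq : ∀ t : ℝ≥0,
      ∫ ω, F t ω ∂(Q.restrict {ω | g ω ≤ t}) = ∫ ω, (M t).indicator (F t) ω ∂Q := fun t => by
    rw [← Measure.restrict_toMeasurable_of_sFinite,
      integral_indicator (measurableSet_toMeasurable _ _)]
  simp only [h_eq]
  obtain ⟨G', hG'_meas, hGG'⟩ := hG.aestronglyMeasurable
  have hG_nonneg : ∀ᵐ ω ∂Q, 0 ≤ G ω := hg.mono fun ω hω =>
    (abs_nonneg _).trans (hFG _ ω (ENNReal.coe_toNNReal hω).ge)
  have h_bound : ∀ t : ℝ≥0, ∀ᵐ ω ∂Q, ‖(M t).indicator (F t) ω‖ ≤ G ω := by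
    intro t
    have h_restrict : ∀ᵐ ω ∂(Q.restrict {ω | g ω ≤ t}), |F t ω| ≤ G' ω := by
      have h_meas : MeasurableSet {ω | ¬ |F t ω| ≤ G' ω} :=
        (measurableSet_le (hF t).measurable.abs hG'_meas.measurable).compl
      rw [ae_iff, Measure.restrict_apply h_meas]
      refine measure_mono_null (fun ω ⟨hlt, hgt⟩ => ?_) (ae_iff.1 hGG')
      exact fun heq => hlt ((hFG t ω hgt).trans_eq heq)
    rw [← Measure.restrict_toMeasurable_of_sFinite,
      ae_restrict_iff' (measurableSet_toMeasurable _ _)] at h_restrict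
    filter_upwards [h_restrict, hGG', hG_nonneg] with ω hω hωG hω0
    by_cases hmem : ω ∈ M t
    · rw [Set.indicator_of_mem hmem, Real.norm_eq_abs, hωG]
      exact hω hmem
    · rwa [Set.indicator_of_notMem hmem, norm_zero]
  refine tendsto_integral_filter_of_dominated_convergence G
    (Eventually.of_forall fun t =>
      ((hF t).aestronglyMeasurable.indicator (measurableSet_toMeasurable _ _)))
    (Eventually.of_forall h_bound) hG ?_
  filter_upwards [hg, hlim] with ω hω hω_lim
  refine hω_lim.congr' ?_
  filter_upwards [eventually_ge_atTop (g ω).toNNReal] with t ht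
  refine (Set.indicator_of_mem (subset_toMeasurable _ _ ?_) _).symm
  exact (ENNReal.coe_toNNReal hω).symm.trans_le (ENNReal.coe_le_coe.2 ht)

namespace ClassC

variable {m0 : MeasurableSpace Ω} {ℱ : Filtration ℝ≥0 m0} {Q : Measure Ω}
  {X : ℝ≥0 → Ω → ℝ} {F : ℝ≥0 → Ω → ℝ} {Finf : Ω → ℝ}

theorem limit_nonneg (hC : ClassC ℱ Q X F Finf) : 0 ≤ Finf := fun ω =>
  ge_of_tendsto' (hC.tendsto ω) fun t => hC.nonneg t ω

theorem le_valueAtLastZero (hC : ClassC ℱ Q X F Finf) {t : ℝ≥0} {ω : Ω}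
    (ht : lastZero X ω ≤ t) : F t ω ≤ valueAtLastZero X F Finf ω := by
  have hg : lastZero X ω ≠ ∞ := ne_top_of_le_ne_top ENNReal.coe_ne_top ht
  rw [valueAtLastZero, if_neg hg]
  exact hC.anti ω (ENNReal.toNNReal_mono ENNReal.coe_ne_top ht)

theorem integrable_mul {P : Measure Ω} {N A : ℝ≥0 → Ω → ℝ} (hC : ClassC ℱ Q X F Finf)
    (hX : ClassSigma ℱ P X N A) (t : ℝ≥0) : Integrable (fun ω => F t ω * X t ω) P := by
  obtain ⟨C, hC_le⟩ := hC.bdd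
  have h_meas : StronglyMeasurable (fun ω => F t ω * X t ω) :=
    ((hC.adapted t).stronglyMeasurable.mono (ℱ.le t)).mul ((hX.subm.1 t).mono (ℱ.le t))
  refine ((hX.subm.integrable t).const_mul C).mono h_meas.aestronglyMeasurable
    (ae_of_all _ fun ω => ?_)
  have hFX : 0 ≤ F t ω * X t ω := mul_nonneg (hC.nonneg t ω) (hX.nonneg t ω)
  rw [Real.norm_of_nonneg hFX, Real.norm_of_nonneg (hFX.trans ?_)] <;>
    exact mul_le_mul_of_nonneg_right (hC_le t ω) (hX.nonneg t ω)

theorem tendsto_setIntegral_mul {P : Measure Ω} {N A : ℝ≥0 → Ω → ℝ}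
    (hC : ClassC ℱ Q X F Finf) (hX : ClassSigma ℱ P X N A) (hQ : AssociatedMeasure ℱ P Q X)
    (hFg : Integrable (valueAtLastZero X F Finf) Q) {s : ℝ≥0} {Λ : Set Ω}
    (hΛ : MeasurableSet[ℱ s] Λ) :
    Tendsto (fun t : ℝ≥0 => ∫ ω in Λ, F t ω * X t ω ∂P) atTop (𝓝 (∫ ω in Λ, Finf ω ∂Q)) := by
  obtain ⟨hQ_sf, hQ_g, hQ_assoc⟩ := hQ
  have := hQ_sf
  have hΛ_meas : MeasurableSet Λ := ℱ.le s _ hΛ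
  have h_density : ∀ t, s ≤ t → ∫ ω in Λ, F t ω * X t ω ∂P =
      ∫ ω, Λ.indicator (F t) ω ∂(Q.restrict {ω | lastZero X ω ≤ t}) := fun t hst => by
    rw [integral_restrict_eq_integral_mul (ℱ.le t) ((hX.subm.1 t).mono (ℱ.le t)).measurable
      (hX.subm.integrable t) (hX.nonneg t) (hQ_assoc t)
      ((hC.adapted t).indicator (ℱ.mono hst _ hΛ)).stronglyMeasurable,
      ← integral_indicator hΛ_meas]
    refine integral_congr_ae (ae_of_all _ fun ω => ?_)
    rw [Set.indicator_mul_left, mul_comm]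
  rw [← integral_indicator hΛ_meas]
  refine (tendsto_integral_restrict_le_of_dominated (measure_eq_zero_iff_ae_notMem.1 hQ_g)
    (fun t => ((hC.adapted t).stronglyMeasurable.mono (ℱ.le t)).indicator hΛ_meas) hFg
    (fun t ω ht => ?_) (ae_of_all _ fun ω => ?_)).congr' ?_
  · rw [abs_of_nonneg (Set.indicator_nonneg (fun ω _ => hC.nonneg t ω) ω)]
    exact (Set.indicator_le_self' (fun ω _ => hC.nonneg t ω) ω).trans (hC.le_valueAtLastZero ht)
  · by_cases hω : ω ∈ Λ
    · simpa only [Set.indicator_of_mem hω] using hC.tendsto ω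
    · simpa only [Set.indicator_of_notMem hω] using tendsto_const_nhds
  · filter_upwards [eventually_ge_atTop s] with t hst using (h_density t hst).symm

end ClassC

theorem penalisation_classC_general
    {m0 : MeasurableSpace Ω} (ℱ : Filtration ℝ≥0 m0) (P : Measure Ω)
    (X N A : ℝ≥0 → Ω → ℝ) (hX : ClassSigma ℱ P X N A)
    (Q : Measure Ω) (hQ : AssociatedMeasure ℱ P Q X)
    (F : ℝ≥0 → Ω → ℝ) (Finf : Ω → ℝ) (hC : ClassC ℱ Q X F Finf)
    (hFg : Integrable (valueAtLastZero X F Finf) Q)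
    (hFinf_ne : ¬ (Finf =ᵐ[Q] fun _ => (0 : ℝ))) :
    (∃ T : ℝ≥0, ∀ t : ℝ≥0, T ≤ t →
      Integrable (fun ω => F t ω * X t ω) P ∧ 0 < ∫ ω, F t ω * X t ω ∂P) ∧
    0 < ∫ ω, Finf ω ∂Q ∧
    (∀ s : ℝ≥0, ∀ Λ : Set Ω, MeasurableSet[ℱ s] Λ →
      Tendsto
        (fun t : ℝ≥0 => (∫ ω in Λ, F t ω * X t ω ∂P) / ∫ ω, F t ω * X t ω ∂P)
        atTop
        (nhds ((∫ ω in Λ, Finf ω ∂Q) / ∫ ω, Finf ω ∂Q))) := by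
  have hFinf_pos : 0 < ∫ ω, Finf ω ∂Q :=
    (integral_nonneg hC.limit_nonneg).lt_of_ne fun h =>
      hFinf_ne ((integral_eq_zero_iff_of_nonneg hC.limit_nonneg hC.integrable).1 h.symm)
  have h_total : Tendsto (fun t => ∫ ω, F t ω * X t ω ∂P) atTop (𝓝 (∫ ω, Finf ω ∂Q)) := by
    simpa only [setIntegral_univ] using
      hC.tendsto_setIntegral_mul hX hQ hFg (MeasurableSet.univ (m := ℱ 0))
  obtain ⟨T, hT⟩ := eventually_atTop.1 (h_total.eventually (eventually_gt_nhds hFinf_pos))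
  refine ⟨⟨T, fun t ht => ⟨hC.integrable_mul hX t, hT t ht⟩⟩, hFinf_pos, fun s Λ hΛ => ?_⟩
  exact (hC.tendsto_setIntegral_mul hX hQ hFg hΛ).div h_total hFinf_pos.ne'

/-- Universal penalisation theorem for class (C) weights: the penalised measures
`Q_t = (F_t X_t / E_P[F_t X_t])·P` converge, on each `F_s`, to
`Q_∞ = (F_∞ / Q[F_∞])·Q`. -/
theorem penalisation_classC
    {m0 : MeasurableSpace Ω} (ℱ : Filtration ℝ≥0 m0) (P : Measure Ω)
    [IsProbabilityMeasure P]
    (hnat : NaturalConditions ℱ P)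
    (hgen : (⨆ t : ℝ≥0, (ℱ t : MeasurableSpace Ω)) = m0)
    (X N A : ℝ≥0 → Ω → ℝ) (hX : ClassSigma ℱ P X N A)
    (Q : Measure Ω) (hQ : AssociatedMeasure ℱ P Q X)
    (hAinf : ∀ᵐ ω ∂P, Tendsto (fun t => A t ω) atTop atTop)
    (hexp : ExpIdentity ℱ P Q X A)
    (F : ℝ≥0 → Ω → ℝ) (Finf : Ω → ℝ) (hC : ClassC ℱ Q X F Finf)
    (hFg : Integrable (valueAtLastZero X F Finf) Q)
    (hFinf_ne : ¬ (Finf =ᵐ[Q] fun _ => (0 : ℝ))) :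
    (∃ T : ℝ≥0, ∀ t : ℝ≥0, T ≤ t →
      Integrable (fun ω => F t ω * X t ω) P ∧ 0 < ∫ ω, F t ω * X t ω ∂P) ∧
    0 < ∫ ω, Finf ω ∂Q ∧
    (∀ s : ℝ≥0, ∀ Λ : Set Ω, MeasurableSet[ℱ s] Λ →
      Tendsto
        (fun t : ℝ≥0 => (∫ ω in Λ, F t ω * X t ω ∂P) / ∫ ω, F t ω * X t ω ∂P)
        atTop
        (nhds ((∫ ω in Λ, Finf ω ∂Q) / ∫ ω, Finf ω ∂Q))) :=
  penalisation_classC_general ℱ P X N A hX Q hQ F Finf hC hFg hFinf_ne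
end
end
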